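/- arXiv:2109.00443 — 4 statements merged into one kernel-verified Lean document; each statement's English description precedes it below -/
import Mathlib

section
/- For every order α ∈ (0,∞], the order-α Augustin information satisfies I_α(P;W) = inf D_α(W‖Q|P), where the infimum is taken only over probability measures Q on (Y,𝒴) that are absolutely continuous with respect to the induced output distribution q_P; i.e., restricting the infimum defining I_α(P;W) from all probability measures on 𝒴 to those absolutely continuous in q_P does not change its value. -/
open MeasureTheory ProbabilityTheory Filter ENNReal
open scoped Classical
set_option maxHeartbeats 1000000

/-- The nonnegative part of an extended real number, as an extended nonnegative real. -/
noncomputable def erealToENNReal (x : EReal) : ℝ≥0∞ :=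
  if x = ⊤ then ⊤ else ENNReal.ofReal x.toReal

variable {X Y : Type*} [MeasurableSpace X] [MeasurableSpace Y]

/-- Order-`α` Rényi divergence `D_α(μ‖ν)` between measures on `Y`, with the
Kullback–Leibler divergence at `α = 1` and the max-divergence at `α = ∞`;
the reference measure is taken to be `μ + ν`. -/
noncomputable def renyiDiv (α : ℝ≥0∞) (μ ν : Measure Y) : EReal :=
  if α = 1 then
    (if μ ≪ ν ∧ Integrable (llr μ ν) μ then ((∫ y, llr μ ν y ∂μ : ℝ) : EReal) else ⊤)
  else if α = ∞ then
    ENNReal.log (essSup (fun y => μ.rnDeriv (μ + ν) y / ν.rnDeriv (μ + ν) y) (μ + ν))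
  else
    (((α.toReal - 1)⁻¹ : ℝ) : EReal) *
      ENNReal.log
        (∫⁻ y, μ.rnDeriv (μ + ν) y ^ α.toReal * ν.rnDeriv (μ + ν) y ^ (1 - α.toReal) ∂(μ + ν))

/-- Order-`α` conditional Rényi divergence `D_α(W‖Q|P) = ∫ D_α(W(x)‖Q) P(dx)`
(the integral of the `EReal`-valued integrand, as positive part minus negative part). -/
noncomputable def condRenyiDiv (α : ℝ≥0∞) (W : Kernel X Y) (Q : Measure Y) (P : Measure X) :
    EReal :=
  ((∫⁻ x, erealToENNReal (renyiDiv α (W x) Q) ∂P : ℝ≥0∞) : EReal)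
    - ((∫⁻ x, erealToENNReal (-(renyiDiv α (W x) Q)) ∂P : ℝ≥0∞) : EReal)

/-- Order-`α` Augustin information `I_α(P;W) = inf_Q D_α(W‖Q|P)`, the infimum being over
all probability measures on the output space. -/
noncomputable def augustinInfo (α : ℝ≥0∞) (W : Kernel X Y) (P : Measure X) : EReal :=
  ⨅ Q : {Q : Measure Y // IsProbabilityMeasure Q}, condRenyiDiv α W Q.1 P

/-- The output distribution `q_P` induced by the input distribution `P`:
`q_P(E) = ∫ W(E|x) P(dx)`. -/
noncomputable def outputDist (W : Kernel X Y) (P : Measure X) : Measure Y := P.bind W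

section Aux

variable {Z : Type*} [MeasurableSpace Z]

lemma erealToENNReal_mono : Monotone erealToENNReal := by
  intro x y hxy
  unfold erealToENNReal
  by_cases hy : y = ⊤
  · simp [hy]
  · have hx : x ≠ ⊤ := fun h => hy (top_le_iff.mp (h ▸ hxy))
    rw [if_neg hx, if_neg hy]
    by_cases hxb : x = ⊥
    · simp [hxb]
    · exact ENNReal.ofReal_le_ofReal (EReal.toReal_le_toReal hxy hxb hy)

lemma ereal_coe_mul_le_of_nonpos {r : ℝ} (hr : r ≤ 0) {x y : EReal} (h : x ≤ y) :
    (r : EReal) * y ≤ (r : EReal) * x := by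
  have h1 : ((-r : ℝ) : EReal) * x ≤ ((-r : ℝ) : EReal) * y :=
    mul_le_mul_of_nonneg_left h (by exact_mod_cast neg_nonneg.mpr hr)
  have h2 : ((-r : ℝ) : EReal) = -(r : EReal) := by norm_cast
  rw [h2, EReal.neg_mul, EReal.neg_mul] at h1
  exact EReal.neg_le_neg_iff.mp h1

lemma rnDeriv_ae_zero_of_null {m ρ : Measure Z} [IsFiniteMeasure m] [SigmaFinite ρ]
    (hm : m ≪ ρ) {t : Set Z} (ht : MeasurableSet t) (h0 : m t = 0) :
    ∀ᵐ x ∂ρ, x ∈ t → m.rnDeriv ρ x = 0 := by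
  have h : ∫⁻ x in t, m.rnDeriv ρ x ∂ρ = 0 := by
    rw [Measure.setLIntegral_rnDeriv' hm ht, h0]
  rw [setLIntegral_eq_zero_iff ht (Measure.measurable_rnDeriv _ _)] at h
  exact h

lemma hellinger_change (a : ℝ) (ha : 0 < a) (μ ν ρ : Measure Z)
    [IsFiniteMeasure μ] [IsFiniteMeasure ν] [IsFiniteMeasure ρ]
    (hμ : μ ≪ ρ) (hν : ν ≪ ρ) :
    ∫⁻ y, μ.rnDeriv (μ + ν) y ^ a * ν.rnDeriv (μ + ν) y ^ (1 - a) ∂(μ + ν)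
      = ∫⁻ y, μ.rnDeriv ρ y ^ a * ν.rnDeriv ρ y ^ (1 - a) ∂ρ := by
  have hρ : μ + ν ≪ ρ := by
    refine Measure.AbsolutelyContinuous.mk fun s hs h0 => ?_
    simp [Measure.add_apply, hμ h0, hν h0]
  have hg : Measurable ((μ + ν).rnDeriv ρ) := Measure.measurable_rnDeriv _ _
  have hF : Measurable fun y => μ.rnDeriv (μ + ν) y ^ a * ν.rnDeriv (μ + ν) y ^ (1 - a) :=
    ((Measure.measurable_rnDeriv _ _).pow_const _).mul
      ((Measure.measurable_rnDeriv _ _).pow_const _)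
  have hwd := lintegral_withDensity_eq_lintegral_mul ρ hg hF
  rw [Measure.withDensity_rnDeriv_eq _ _ hρ] at hwd
  rw [hwd]
  have hμac : μ ≪ μ + ν := Measure.absolutelyContinuous_of_le (Measure.le_add_right le_rfl)
  have hνac : ν ≪ μ + ν := Measure.absolutelyContinuous_of_le (Measure.le_add_left le_rfl)
  have h1 := Measure.rnDeriv_mul_rnDeriv (κ := ρ) hμac
  have h2 := Measure.rnDeriv_mul_rnDeriv (κ := ρ) hνac
  have hgtop := Measure.rnDeriv_lt_top (μ + ν) ρ
  have hftop : ∀ᵐ x ∂ρ, x ∈ {x | μ.rnDeriv (μ + ν) x = ⊤} → (μ + ν).rnDeriv ρ x = 0 := by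
    refine rnDeriv_ae_zero_of_null hρ
      ((Measure.measurable_rnDeriv μ (μ + ν)) (measurableSet_singleton ⊤)) ?_
    simpa using ae_iff.mp (Measure.rnDeriv_ne_top μ (μ + ν))
  have hhtop : ∀ᵐ x ∂ρ, x ∈ {x | ν.rnDeriv (μ + ν) x = ⊤} → (μ + ν).rnDeriv ρ x = 0 := by
    refine rnDeriv_ae_zero_of_null hρ
      ((Measure.measurable_rnDeriv ν (μ + ν)) (measurableSet_singleton ⊤)) ?_
    simpa using ae_iff.mp (Measure.rnDeriv_ne_top ν (μ + ν))
  apply lintegral_congr_ae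
  filter_upwards [h1, h2, hgtop, hftop, hhtop] with x h1x h2x hgt hft hht
  simp only [Pi.mul_apply] at h1x h2x ⊢
  rw [← h1x, ← h2x]
  by_cases hg0 : (μ + ν).rnDeriv ρ x = 0
  · simp [hg0, ENNReal.zero_rpow_of_pos ha]
  · have hfne : μ.rnDeriv (μ + ν) x ≠ ⊤ := fun h => hg0 (hft h)
    have hhne : ν.rnDeriv (μ + ν) x ≠ ⊤ := fun h => hg0 (hht h)
    rw [ENNReal.mul_rpow_of_ne_top hfne hgt.ne, ENNReal.mul_rpow_of_ne_top hhne hgt.ne]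
    have hgg : (μ + ν).rnDeriv ρ x ^ a * (μ + ν).rnDeriv ρ x ^ (1 - a) = (μ + ν).rnDeriv ρ x := by
      rw [← ENNReal.rpow_add a (1 - a) hg0 hgt.ne]
      norm_num
    calc (μ + ν).rnDeriv ρ x * (μ.rnDeriv (μ + ν) x ^ a * ν.rnDeriv (μ + ν) x ^ (1 - a))
        = μ.rnDeriv (μ + ν) x ^ a * ν.rnDeriv (μ + ν) x ^ (1 - a) *
            ((μ + ν).rnDeriv ρ x ^ a * (μ + ν).rnDeriv ρ x ^ (1 - a)) := by rw [hgg]; ring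
      _ = μ.rnDeriv (μ + ν) x ^ a * (μ + ν).rnDeriv ρ x ^ a *
            (ν.rnDeriv (μ + ν) x ^ (1 - a) * (μ + ν).rnDeriv ρ x ^ (1 - a)) := by ring

lemma essSup_ratio (μ ν : Measure Z) [IsFiniteMeasure μ] [IsFiniteMeasure ν] :
    essSup (fun y => μ.rnDeriv (μ + ν) y / ν.rnDeriv (μ + ν) y) (μ + ν)
      = sInf {k : ℝ≥0∞ | μ ≤ k • ν} := by
  have hμac : μ ≪ μ + ν := Measure.absolutelyContinuous_of_le (Measure.le_add_right le_rfl)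
  have hνac : ν ≪ μ + ν := Measure.absolutelyContinuous_of_le (Measure.le_add_left le_rfl)
  have hf : Measurable (μ.rnDeriv (μ + ν)) := Measure.measurable_rnDeriv _ _
  have hh : Measurable (ν.rnDeriv (μ + ν)) := Measure.measurable_rnDeriv _ _
  apply le_antisymm
  · refine le_sInf fun k hk => ?_
    by_cases hktop : k = ⊤
    · exact hktop ▸ essSup_le_of_ae_le _ (Eventually.of_forall fun _ => le_top)
    · have hle : ∀ᵐ y ∂(μ + ν), μ.rnDeriv (μ + ν) y ≤ k * ν.rnDeriv (μ + ν) y := by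
        refine ae_le_of_forall_setLIntegral_le_of_sigmaFinite hf fun t ht _ => ?_
        rw [Measure.setLIntegral_rnDeriv' hμac ht, lintegral_const_mul k hh,
          Measure.setLIntegral_rnDeriv' hνac ht]
        have := Measure.le_iff'.mp hk t
        rwa [Measure.smul_apply, smul_eq_mul] at this
      refine essSup_le_of_ae_le _ ?_
      filter_upwards [hle, Measure.rnDeriv_lt_top ν (μ + ν)] with y hy hyt
      by_cases hy0 : ν.rnDeriv (μ + ν) y = 0
      · have h0 : μ.rnDeriv (μ + ν) y = 0 := le_antisymm (by simpa [hy0] using hy) zero_le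
        simp [h0, ENNReal.zero_div]
      · rw [ENNReal.div_le_iff_le_mul (Or.inl hy0) (Or.inl hyt.ne)]
        exact hy
  · by_cases htop :
      essSup (fun y => μ.rnDeriv (μ + ν) y / ν.rnDeriv (μ + ν) y) (μ + ν) = ⊤
    · rw [htop]; exact le_top
    · refine sInf_le ?_
      have hae := ae_le_essSup (μ := μ + ν)
        (fun y => μ.rnDeriv (μ + ν) y / ν.rnDeriv (μ + ν) y)
      set k := essSup (fun y => μ.rnDeriv (μ + ν) y / ν.rnDeriv (μ + ν) y) (μ + ν) with hk_def
      have hkey : ∀ᵐ y ∂(μ + ν), μ.rnDeriv (μ + ν) y ≤ k * ν.rnDeriv (μ + ν) y := by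
        filter_upwards [hae, Measure.rnDeriv_lt_top ν (μ + ν)] with y hy hyt
        by_cases hy0 : ν.rnDeriv (μ + ν) y = 0
        · by_cases hf0 : μ.rnDeriv (μ + ν) y = 0
          · simp [hf0]
          · exfalso
            rw [hy0, ENNReal.div_zero hf0] at hy
            exact htop (top_le_iff.mp hy)
        · calc μ.rnDeriv (μ + ν) y
              = μ.rnDeriv (μ + ν) y / ν.rnDeriv (μ + ν) y * ν.rnDeriv (μ + ν) y := by
                rw [ENNReal.div_mul_cancel hy0 hyt.ne]
            _ ≤ k * ν.rnDeriv (μ + ν) y := mul_le_mul_left hy _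
      refine Measure.le_iff.mpr fun t ht => ?_
      rw [← Measure.setLIntegral_rnDeriv' hμac ht]
      calc ∫⁻ y in t, μ.rnDeriv (μ + ν) y ∂(μ + ν)
          ≤ ∫⁻ y in t, k * ν.rnDeriv (μ + ν) y ∂(μ + ν) :=
            lintegral_mono_ae (ae_restrict_of_ae hkey)
        _ = k * ν t := by
            rw [lintegral_const_mul k hh, Measure.setLIntegral_rnDeriv' hνac ht]
        _ = (k • ν) t := by rw [Measure.smul_apply, smul_eq_mul]

lemma renyiDiv_eq_top_of_sing (α : ℝ≥0∞) (hα : 0 < α) (μ Q : Measure Z)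
    [IsProbabilityMeasure μ] [IsFiniteMeasure Q] {s : Set Z} (hs : MeasurableSet s)
    (hμs : μ sᶜ = 0) (hQs : Q s = 0) : renyiDiv α μ Q = ⊤ := by
  have hμs1 : μ s = 1 := by
    have h := measure_add_measure_compl (μ := μ) hs
    rw [hμs, add_zero, measure_univ] at h
    exact h
  have hμac : μ ≪ μ + Q := Measure.absolutelyContinuous_of_le (Measure.le_add_right le_rfl)
  have hQac : Q ≪ μ + Q := Measure.absolutelyContinuous_of_le (Measure.le_add_left le_rfl)
  unfold renyiDiv
  by_cases hα1 : α = 1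
  · rw [if_pos hα1, if_neg]
    rintro ⟨hac, -⟩
    have h0 := hac hQs
    rw [hμs1] at h0
    exact one_ne_zero h0
  · rw [if_neg hα1]
    by_cases hαtop : α = ⊤
    · rw [if_pos hαtop, essSup_ratio]
      have hempty : {k : ℝ≥0∞ | μ ≤ k • Q} = ∅ := by
        ext k
        simp only [Set.mem_setOf_eq, Set.mem_empty_iff_false, iff_false]
        intro hk
        have h := Measure.le_iff'.mp hk s
        rw [hμs1, Measure.smul_apply, hQs, smul_eq_mul, mul_zero] at h
        simp at h
      rw [hempty, sInf_empty]
      exact ENNReal.log_top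
    · rw [if_neg hαtop]
      set a := α.toReal with ha_def
      have ha : 0 < a := ENNReal.toReal_pos hα.ne' hαtop
      have ha1 : a ≠ 1 := fun h =>
        hα1 (by rw [← ENNReal.ofReal_toReal hαtop, ← ha_def, h, ENNReal.ofReal_one])
      have hQ0 : ∀ᵐ x ∂(μ + Q), x ∈ s → Q.rnDeriv (μ + Q) x = 0 :=
        rnDeriv_ae_zero_of_null hQac hs hQs
      have hμ0 : ∀ᵐ x ∂(μ + Q), x ∈ sᶜ → μ.rnDeriv (μ + Q) x = 0 :=
        rnDeriv_ae_zero_of_null hμac hs.compl hμs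
      rcases lt_or_gt_of_ne ha1 with hlt | hgt
      · have hint : ∫⁻ y, μ.rnDeriv (μ + Q) y ^ a * Q.rnDeriv (μ + Q) y ^ (1 - a) ∂(μ + Q)
            = 0 := by
          rw [lintegral_eq_zero_iff
            (f := fun y => μ.rnDeriv (μ + Q) y ^ a * Q.rnDeriv (μ + Q) y ^ (1 - a))
            (((Measure.measurable_rnDeriv _ _).pow_const _).mul
            ((Measure.measurable_rnDeriv _ _).pow_const _))]
          filter_upwards [hQ0, hμ0] with x hx1 hx2
          by_cases hxs : x ∈ s
          · simp [hx1 hxs, ENNReal.zero_rpow_of_pos (by linarith : (0:ℝ) < 1 - a)]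
          · simp [hx2 hxs, ENNReal.zero_rpow_of_pos ha]
        rw [hint, ENNReal.log_zero]
        exact EReal.coe_mul_bot_of_neg (inv_neg''.mpr (by linarith))
      · have hint : ∫⁻ y, μ.rnDeriv (μ + Q) y ^ a * Q.rnDeriv (μ + Q) y ^ (1 - a) ∂(μ + Q)
            = ⊤ := by
          have hcalc : ∫⁻ y, μ.rnDeriv (μ + Q) y ^ a * Q.rnDeriv (μ + Q) y ^ (1 - a) ∂μ
              = ⊤ := by
            have hsae : ∀ᵐ y ∂μ, y ∈ s := by
              rw [ae_iff]
              simpa [Set.compl_def] using hμs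
            have hae : ∀ᵐ y ∂μ,
                μ.rnDeriv (μ + Q) y ^ a * Q.rnDeriv (μ + Q) y ^ (1 - a) = ⊤ := by
              filter_upwards [hsae, hμac.ae_le hQ0, Measure.rnDeriv_pos hμac]
                with y hys hQy hpos
              rw [hQy hys, ENNReal.zero_rpow_of_neg (by linarith)]
              refine ENNReal.mul_top ?_
              rw [ne_eq, ENNReal.rpow_eq_zero_iff]
              rintro (⟨h0, -⟩ | ⟨-, hneg⟩)
              · exact hpos.ne' h0
              · linarith
            rw [lintegral_congr_ae hae, lintegral_const]
            simp
          refine top_le_iff.mp ?_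
          rw [← hcalc]
          exact lintegral_mono' (Measure.le_add_right le_rfl) le_rfl
        rw [hint, ENNReal.log_top]
        exact EReal.coe_mul_top_of_pos (inv_pos.mpr (by linarith))

lemma renyiDiv_le_of_decomp (α : ℝ≥0∞) (hα : 0 < α) (μ Q₁ Q₀ : Measure Z)
    [IsProbabilityMeasure μ] [IsFiniteMeasure Q₁] [IsFiniteMeasure Q₀]
    {s : Set Z} (hs : MeasurableSet s) (hμs : μ sᶜ = 0) (hQ₀s : Q₀ s = 0)
    (hc0 : Q₁ Set.univ ≠ 0) (hc1 : Q₁ Set.univ ≤ 1) :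
    renyiDiv α μ ((Q₁ Set.univ)⁻¹ • Q₁) ≤ renyiDiv α μ (Q₁ + Q₀) := by
  set c := Q₁ Set.univ with hc_def
  have hctop : c ≠ ⊤ := (hc1.trans_lt ENNReal.one_lt_top).ne
  have hcinv0 : c⁻¹ ≠ 0 := ENNReal.inv_ne_zero.mpr hctop
  have hcinvtop : c⁻¹ ≠ ⊤ := ENNReal.inv_ne_top.mpr hc0
  have hcinv1 : (1 : ℝ≥0∞) ≤ c⁻¹ := ENNReal.one_le_inv.mpr hc1
  haveI hQ'prob : IsProbabilityMeasure (c⁻¹ • Q₁) :=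
    ⟨by rw [Measure.smul_apply, smul_eq_mul, ← hc_def, ENNReal.inv_mul_cancel hc0 hctop]⟩
  set Q' := c⁻¹ • Q₁ with hQ'_def
  set Q := Q₁ + Q₀ with hQ_def
  have hQ₁Q : Q₁ ≪ Q := Measure.absolutelyContinuous_of_le (Measure.le_add_right le_rfl)
  have hQ₀Q : Q₀ ≪ Q := Measure.absolutelyContinuous_of_le (Measure.le_add_left le_rfl)
  have hμ_inter : ∀ A : Set Z, μ A ≤ μ (A ∩ s) := fun A => by
    calc μ A ≤ μ ((A ∩ s) ∪ sᶜ) := measure_mono (fun x hx => by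
          by_cases h : x ∈ s
          exacts [Or.inl ⟨hx, h⟩, Or.inr h])
      _ ≤ μ (A ∩ s) + μ sᶜ := measure_union_le _ _
      _ = μ (A ∩ s) := by rw [hμs, add_zero]
  have hQ_inter : ∀ A : Set Z, Q (A ∩ s) ≤ Q₁ A := fun A => by
    rw [hQ_def, Measure.add_apply]
    have h2 : Q₀ (A ∩ s) = 0 :=
      le_antisymm ((measure_mono Set.inter_subset_right).trans hQ₀s.le) zero_le
    rw [h2, add_zero]
    exact measure_mono Set.inter_subset_left
  unfold renyiDiv
  by_cases hα1 : α = 1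
  · rw [if_pos hα1, if_pos hα1]
    by_cases hcond : μ ≪ Q ∧ Integrable (llr μ Q) μ
    swap
    · rw [if_neg hcond]; exact le_top
    obtain ⟨hacQ, hint⟩ := hcond
    have hacQ1 : μ ≪ Q₁ := by
      refine Measure.AbsolutelyContinuous.mk fun A hA h0 => ?_
      have hQAs : Q (A ∩ s) = 0 := le_antisymm ((hQ_inter A).trans h0.le) zero_le
      exact le_antisymm ((hμ_inter A).trans (hacQ hQAs).le) zero_le
    have hacQ' : μ ≪ Q' := by
      refine Measure.AbsolutelyContinuous.mk fun A hA h0 => ?_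
      apply hacQ1
      rw [hQ'_def, Measure.smul_apply, smul_eq_mul] at h0
      exact (mul_eq_zero.mp h0).resolve_left hcinv0
    have h_ae : llr μ Q' =ᵐ[μ] fun y => Real.log c.toReal + llr μ Q y := by
      have h1 : μ.rnDeriv Q' =ᵐ[Q₁] (c⁻¹)⁻¹ • μ.rnDeriv Q₁ :=
        Measure.rnDeriv_smul_right_of_ne_top μ Q₁ hcinv0 hcinvtop
      have h1' : ∀ᵐ y ∂μ, μ.rnDeriv Q' y = c * μ.rnDeriv Q₁ y := by
        filter_upwards [hacQ1.ae_le h1] with y hy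
        rw [hy, Pi.smul_apply, smul_eq_mul, inv_inv]
      have h2 : μ.rnDeriv Q₁ * Q₁.rnDeriv Q =ᵐ[Q₁] μ.rnDeriv Q :=
        Measure.rnDeriv_mul_rnDeriv' hQ₁Q
      have h3 : ∀ᵐ y ∂μ, Q₁.rnDeriv Q y = 1 := by
        have hsum : Q.rnDeriv Q =ᵐ[Q] Q₁.rnDeriv Q + Q₀.rnDeriv Q := by
          rw [hQ_def]
          exact Measure.rnDeriv_add' Q₁ Q₀ Q
        have hself : Q.rnDeriv Q =ᵐ[Q] fun _ => 1 := Measure.rnDeriv_self Q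
        have hzero : ∀ᵐ y ∂Q, y ∈ s → Q₀.rnDeriv Q y = 0 :=
          rnDeriv_ae_zero_of_null hQ₀Q hs hQ₀s
        have hsae : ∀ᵐ y ∂μ, y ∈ s := by
          rw [ae_iff]
          simpa [Set.compl_def] using hμs
        filter_upwards [hacQ.ae_le hsum, hacQ.ae_le hself, hacQ.ae_le hzero, hsae]
          with y hy1 hy2 hy3 hy4
        have := hy1.symm.trans hy2
        rw [Pi.add_apply, hy3 hy4, add_zero] at this
        exact this
      have h4 : ∀ᵐ y ∂μ, μ.rnDeriv Q y ≠ 0 := (Measure.rnDeriv_pos hacQ).mono fun y hy => hy.ne'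
      have h5 : ∀ᵐ y ∂μ, μ.rnDeriv Q y ≠ ⊤ := hacQ.ae_le (Measure.rnDeriv_ne_top μ Q)
      filter_upwards [h1', hacQ1.ae_le h2, h3, h4, h5] with y h1y h2y h3y h4y h5y
      have hQ'y : μ.rnDeriv Q' y = c * μ.rnDeriv Q y := by
        rw [h1y]
        congr 1
        rw [← h2y, Pi.mul_apply, h3y, mul_one]
      show Real.log (μ.rnDeriv Q' y).toReal = Real.log c.toReal + Real.log (μ.rnDeriv Q y).toReal
      rw [hQ'y, ENNReal.toReal_mul,
        Real.log_mul (ENNReal.toReal_ne_zero.mpr ⟨hc0, hctop⟩)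
          (ENNReal.toReal_ne_zero.mpr ⟨h4y, h5y⟩)]
    have hint' : Integrable (llr μ Q') μ :=
      (Integrable.congr ((integrable_const _).add hint) h_ae.symm)
    rw [if_pos ⟨hacQ', hint'⟩, if_pos ⟨hacQ, hint⟩]
    rw [EReal.coe_le_coe_iff]
    calc ∫ y, llr μ Q' y ∂μ = ∫ y, (Real.log c.toReal + llr μ Q y) ∂μ := integral_congr_ae h_ae
      _ = Real.log c.toReal + ∫ y, llr μ Q y ∂μ := by
          rw [integral_add (integrable_const _) hint, integral_const]
          simp
      _ ≤ ∫ y, llr μ Q y ∂μ := by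
          have hlog : Real.log c.toReal ≤ 0 := by
            refine Real.log_nonpos ENNReal.toReal_nonneg ?_
            have := ENNReal.toReal_mono ENNReal.one_ne_top hc1
            simpa using this
          linarith
  · rw [if_neg hα1, if_neg hα1]
    by_cases hαtop : α = ⊤
    · rw [if_pos hαtop, if_pos hαtop, essSup_ratio μ Q', essSup_ratio μ Q]
      refine ENNReal.log_monotone (sInf_le_sInf fun k hk => ?_)
      simp only [Set.mem_setOf_eq] at hk ⊢
      refine Measure.le_iff'.mpr fun A => ?_
      calc μ A ≤ μ (A ∩ s) := hμ_inter A
        _ ≤ (k • Q) (A ∩ s) := Measure.le_iff'.mp hk (A ∩ s)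
        _ = k * Q (A ∩ s) := by rw [Measure.smul_apply, smul_eq_mul]
        _ ≤ k * Q₁ A := mul_le_mul_right (hQ_inter A) k
        _ ≤ k * (c⁻¹ * Q₁ A) := mul_le_mul_right (le_mul_of_one_le_left zero_le hcinv1) k
        _ = (k • Q') A := by rw [hQ'_def, Measure.smul_apply, Measure.smul_apply, smul_eq_mul,
              smul_eq_mul]
    · rw [if_neg hαtop, if_neg hαtop]
      set a := α.toReal with ha_def
      have ha : 0 < a := ENNReal.toReal_pos hα.ne' hαtop
      have ha1 : a ≠ 1 := fun h =>
        hα1 (by rw [← ENNReal.ofReal_toReal hαtop, ← ha_def, h, ENNReal.ofReal_one])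
      set ρ := μ + Q with hρ_def
      have hμρ : μ ≪ ρ := Measure.absolutelyContinuous_of_le (Measure.le_add_right le_rfl)
      have hQρ : Q ≪ ρ := Measure.absolutelyContinuous_of_le (Measure.le_add_left le_rfl)
      have hQ'ρ : Q' ≪ ρ := (Measure.smul_absolutelyContinuous.trans hQ₁Q).trans hQρ
      rw [hellinger_change a ha μ Q' ρ hμρ hQ'ρ, hellinger_change a ha μ Q ρ hμρ hQρ]
      have hQd : Q.rnDeriv ρ =ᵐ[ρ] Q₁.rnDeriv ρ + Q₀.rnDeriv ρ := by
        rw [hQ_def]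
        exact Measure.rnDeriv_add' Q₁ Q₀ ρ
      have hQ'd : Q'.rnDeriv ρ =ᵐ[ρ] fun y => c⁻¹ * Q₁.rnDeriv ρ y := by
        filter_upwards [Measure.rnDeriv_smul_left_of_ne_top Q₁ ρ hcinvtop] with y hy
        show ((c⁻¹ • Q₁).rnDeriv ρ) y = c⁻¹ * Q₁.rnDeriv ρ y
        rw [hy, Pi.smul_apply, smul_eq_mul]
      have hQ₀0 : ∀ᵐ y ∂ρ, y ∈ s → Q₀.rnDeriv ρ y = 0 :=
        rnDeriv_ae_zero_of_null (hQ₀Q.trans hQρ) hs hQ₀s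
      have hμ0 : ∀ᵐ y ∂ρ, y ∈ sᶜ → μ.rnDeriv ρ y = 0 :=
        rnDeriv_ae_zero_of_null hμρ hs.compl hμs
      have hcomp : ∀ᵐ y ∂ρ, y ∈ s → Q.rnDeriv ρ y ≤ Q'.rnDeriv ρ y := by
        filter_upwards [hQd, hQ'd, hQ₀0] with y h1 h2 h3 hys
        rw [h1, h2, Pi.add_apply, h3 hys, add_zero]
        exact le_mul_of_one_le_left zero_le hcinv1
      rcases lt_or_gt_of_ne ha1 with hlt | hgt
      · have hI : ∫⁻ y, μ.rnDeriv ρ y ^ a * Q.rnDeriv ρ y ^ (1 - a) ∂ρ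
            ≤ ∫⁻ y, μ.rnDeriv ρ y ^ a * Q'.rnDeriv ρ y ^ (1 - a) ∂ρ := by
          refine lintegral_mono_ae ?_
          filter_upwards [hcomp, hμ0] with y h1 h2
          by_cases hys : y ∈ s
          · exact mul_le_mul_right (ENNReal.rpow_le_rpow (h1 hys) (by linarith)) _
          · simp [h2 hys, ENNReal.zero_rpow_of_pos ha]
        exact ereal_coe_mul_le_of_nonpos (inv_nonpos.mpr (by linarith))
          (ENNReal.log_monotone hI)
      · have hI : ∫⁻ y, μ.rnDeriv ρ y ^ a * Q'.rnDeriv ρ y ^ (1 - a) ∂ρ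
            ≤ ∫⁻ y, μ.rnDeriv ρ y ^ a * Q.rnDeriv ρ y ^ (1 - a) ∂ρ := by
          refine lintegral_mono_ae ?_
          filter_upwards [hcomp, hμ0] with y h1 h2
          by_cases hys : y ∈ s
          · refine mul_le_mul_right ?_ _
            rw [show (1 - a) = -(a - 1) by ring, ENNReal.rpow_neg, ENNReal.rpow_neg]
            exact ENNReal.inv_le_inv.mpr (ENNReal.rpow_le_rpow (h1 hys) (by linarith))
          · simp [h2 hys, ENNReal.zero_rpow_of_pos ha]
        exact mul_le_mul_of_nonneg_left (ENNReal.log_monotone hI)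
          (by exact_mod_cast inv_nonneg.mpr (by linarith : (0:ℝ) ≤ a - 1))

lemma condRenyiDiv_mono (α : ℝ≥0∞) (W : Kernel X Y) (P : Measure X) (Q Q' : Measure Y)
    (h : ∀ᵐ x ∂P, renyiDiv α (W x) Q' ≤ renyiDiv α (W x) Q) :
    condRenyiDiv α W Q' P ≤ condRenyiDiv α W Q P := by
  unfold condRenyiDiv
  refine EReal.sub_le_sub ?_ ?_
  · exact EReal.coe_ennreal_le_coe_ennreal_iff.mpr
      (lintegral_mono_ae (h.mono fun x hx => erealToENNReal_mono hx))
  · exact EReal.coe_ennreal_le_coe_ennreal_iff.mpr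
      (lintegral_mono_ae (h.mono fun x hx => erealToENNReal_mono (EReal.neg_le_neg_iff.mpr hx)))

end Aux

/-- Restricting the infimum defining the order-`α` Augustin information to probability
measures absolutely continuous in `q_P` does not change its value. -/
theorem augustinInfo_eq_iInf_ac
    [MeasurableSpace.CountablyGenerated Y]
    (α : ℝ≥0∞) (hα : 0 < α)
    (W : Kernel X Y) [IsMarkovKernel W]
    (P : Measure X) [IsProbabilityMeasure P] :
    augustinInfo α W P =
      ⨅ Q : {Q : Measure Y // IsProbabilityMeasure Q ∧ Q ≪ outputDist W P},
        condRenyiDiv α W Q.1 P := by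
  haveI hq_prob : IsProbabilityMeasure (outputDist W P) := by
    constructor
    rw [outputDist, Measure.bind_apply MeasurableSet.univ (Kernel.measurable W).aemeasurable]
    simp
  unfold augustinInfo
  apply le_antisymm
  · refine le_iInf fun Q => ?_
    exact iInf_le (fun Q : {Q : Measure Y // IsProbabilityMeasure Q} => condRenyiDiv α W Q.1 P)
      ⟨Q.1, Q.2.1⟩
  refine le_iInf fun Qp => ?_
  obtain ⟨Q, hQprob⟩ := Qp
  haveI := hQprob
  set q := outputDist W P with hq_def
  set Q₀ := Q.singularPart q with hQ₀_def
  set Q₁ := q.withDensity (Q.rnDeriv q) with hQ₁_def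
  have hdec : Q₀ + Q₁ = Q := (Q.haveLebesgueDecomposition_add q).symm
  haveI : IsFiniteMeasure Q₁ :=
    isFiniteMeasure_of_le Q (Measure.withDensity_rnDeriv_le Q q)
  haveI : IsFiniteMeasure Q₀ :=
    isFiniteMeasure_of_le Q (Measure.singularPart_le Q q)
  obtain ⟨s, hs, hQ₀s, hqs⟩ := Measure.mutuallySingular_singularPart Q q
  have hWs : ∀ᵐ x ∂P, (W x) sᶜ = 0 := by
    have h0 : ∫⁻ x, (W x) sᶜ ∂P = 0 := by
      rw [← Measure.bind_apply hs.compl (Kernel.measurable W).aemeasurable]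
      exact hqs
    filter_upwards [(lintegral_eq_zero_iff (Kernel.measurable_coe W hs.compl)).mp h0]
      with x hx using hx
  by_cases hc : Q₁ Set.univ = 0
  · have hQ1 : Q₁ = 0 := Measure.measure_univ_eq_zero.mp hc
    have hQs : Q s = 0 := by
      rw [← hdec, Measure.add_apply, hQ₀s, hQ1]
      simp
    have htop : condRenyiDiv α W Q P = ⊤ := by
      unfold condRenyiDiv
      have h_ae : ∀ᵐ x ∂P, renyiDiv α (W x) Q = ⊤ :=
        hWs.mono fun x hx => renyiDiv_eq_top_of_sing α hα (W x) Q hs hx hQs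
      have h1 : ∫⁻ x, erealToENNReal (renyiDiv α (W x) Q) ∂P = ⊤ := by
        have heq : (fun x => erealToENNReal (renyiDiv α (W x) Q)) =ᵐ[P] fun _ => (⊤ : ℝ≥0∞) :=
          h_ae.mono fun x hx => by simp [erealToENNReal, hx]
        rw [lintegral_congr_ae heq, lintegral_const]
        simp
      have h2 : ∫⁻ x, erealToENNReal (-(renyiDiv α (W x) Q)) ∂P = 0 := by
        have heq : (fun x => erealToENNReal (-(renyiDiv α (W x) Q))) =ᵐ[P] fun _ => (0 : ℝ≥0∞) :=
          h_ae.mono fun x hx => by simp [erealToENNReal, hx]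
        rw [lintegral_congr_ae heq, lintegral_zero]
      rw [h1, h2]
      simp
    rw [htop]
    exact le_top
  · have hc1 : Q₁ Set.univ ≤ 1 := by
      calc Q₁ Set.univ ≤ Q Set.univ :=
            Measure.le_iff'.mp (Measure.withDensity_rnDeriv_le Q q) Set.univ
        _ = 1 := measure_univ
    set Q' := (Q₁ Set.univ)⁻¹ • Q₁ with hQ'_def
    haveI hQ'prob : IsProbabilityMeasure Q' := by
      constructor
      rw [hQ'_def, Measure.smul_apply, smul_eq_mul,
        ENNReal.inv_mul_cancel hc (hc1.trans_lt ENNReal.one_lt_top).ne]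
    have hQ'ac : Q' ≪ q :=
      Measure.AbsolutelyContinuous.smul_left (withDensity_absolutelyContinuous q _) _
    refine iInf_le_of_le ⟨Q', hQ'prob, hQ'ac⟩ ?_
    refine condRenyiDiv_mono α W P Q Q' ?_
    refine hWs.mono fun x hx => ?_
    have hle := renyiDiv_le_of_decomp α hα (W x) Q₁ Q₀ hs hx hQ₀s hc hc1
    rwa [show Q₁ + Q₀ = Q from by rw [add_comm]; exact hdec] at hle
end

section
/- Let α ∈ (0,∞] and let Q be a probability measure on (Y,𝒴) with D_α(W‖Q|P) < ∞. Write Q = Q_∼ + Q_⊥ for the Lebesgue decomposition of Q with respect to q_P, where Q_∼ ≪ q_P and Q_⊥ ⊥ q_P. Then the total mass ‖Q_∼‖ is strictly positive and D_α(W‖Q|P) = D_α(W‖Q_∼/‖Q_∼‖ | P) − ln ‖Q_∼‖. -/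
open MeasureTheory ProbabilityTheory Filter ENNReal
open scoped Classical

variable {X Y : Type*} [MeasurableSpace X] [MeasurableSpace Y]

section AuxiliaryLemmas

open Real MeasureTheory

namespace RenyiAux

variable {Y : Type*} [MeasurableSpace Y]

lemma phi_top : erealToENNReal ⊤ = ⊤ := by simp [erealToENNReal]

lemma phi_bot : erealToENNReal ⊥ = 0 := by simp [erealToENNReal]

lemma phi_nonpos {x : EReal} (hx : x ≤ 0) : erealToENNReal x = 0 := by
  induction x
  · simp [erealToENNReal]
  · rename_i r
    rw [erealToENNReal, if_neg (by simp)]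
    simp only [EReal.toReal_coe]
    exact ENNReal.ofReal_eq_zero.mpr (by exact_mod_cast hx)
  · exact absurd hx (by simp)

lemma phi_neg_of_nonneg {x : EReal} (hx : 0 ≤ x) : erealToENNReal (-x) = 0 := by
  apply phi_nonpos
  induction x
  · exact absurd hx (by simp)
  · rename_i r
    rw [← EReal.coe_neg]
    exact_mod_cast neg_nonpos.mpr (by exact_mod_cast hx)
  · simp [EReal.neg_top]

lemma phi_coe (x : ℝ) : erealToENNReal (x : EReal) = ENNReal.ofReal x := by
  rw [erealToENNReal, if_neg (by simp)]
  simp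

lemma phi_add_coe {x : EReal} (hx : 0 ≤ x) {r : ℝ} (hr : 0 ≤ r) :
    erealToENNReal (x + (r : EReal)) = erealToENNReal x + ENNReal.ofReal r := by
  induction x
  · exact absurd hx (by simp)
  · rename_i s
    have hs : 0 ≤ s := by exact_mod_cast hx
    rw [← EReal.coe_add, phi_coe, phi_coe, ENNReal.ofReal_add hs hr]
  · rw [EReal.top_add_coe, phi_top]
    simp

lemma ae_rnDeriv_zero_of_null {μ ρ : Measure Y} {s : Set Y} (hs : MeasurableSet s)
    (hμs : μ s = 0) :
    ∀ᵐ y ∂ρ, y ∈ s → μ.rnDeriv ρ y = 0 := by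
  have hle := Measure.setLIntegral_rnDeriv_le (μ := μ) (ν := ρ) s
  rw [hμs, nonpos_iff_eq_zero] at hle
  have h0 := (lintegral_eq_zero_iff (Measure.measurable_rnDeriv μ ρ)).mp hle
  have h0' : ∀ᵐ y ∂ρ.restrict s, μ.rnDeriv ρ y = 0 := h0.mono fun y hy => hy
  exact (ae_restrict_iff' hs).mp h0'

lemma ae_rnDeriv_zero_of_rnDeriv_top {μ ρ ρ' : Measure Y} [SigmaFinite μ] :
    ∀ᵐ y ∂ρ', μ.rnDeriv ρ y = ⊤ → ρ.rnDeriv ρ' y = 0 := by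
  have hnull : ρ {y | μ.rnDeriv ρ y = ⊤} = 0 := by
    have := Measure.rnDeriv_ne_top μ ρ
    rw [ae_iff] at this
    simpa using this
  have := ae_rnDeriv_zero_of_null (ρ := ρ')
    (s := {y | μ.rnDeriv ρ y = ⊤})
    ((Measure.measurable_rnDeriv μ ρ) (measurableSet_singleton ⊤)) hnull
  exact this

lemma lintegral_rpow_rnDeriv_congr {μ ν ρ ρ' : Measure Y}
    [IsFiniteMeasure μ] [IsFiniteMeasure ν] [IsFiniteMeasure ρ] [IsFiniteMeasure ρ']
    {a : ℝ} (ha : 0 < a) (hμ : μ ≪ ρ) (hν : ν ≪ ρ) (hρ : ρ ≪ ρ') :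
    ∫⁻ y, μ.rnDeriv ρ' y ^ a * ν.rnDeriv ρ' y ^ (1 - a) ∂ρ'
      = ∫⁻ y, μ.rnDeriv ρ y ^ a * ν.rnDeriv ρ y ^ (1 - a) ∂ρ := by
  have h1 : μ.rnDeriv ρ * ρ.rnDeriv ρ' =ᵐ[ρ'] μ.rnDeriv ρ' := Measure.rnDeriv_mul_rnDeriv hμ
  have h2 : ν.rnDeriv ρ * ρ.rnDeriv ρ' =ᵐ[ρ'] ν.rnDeriv ρ' := Measure.rnDeriv_mul_rnDeriv hν
  have hk_top : ∀ᵐ y ∂ρ', ρ.rnDeriv ρ' y ≠ ⊤ := Measure.rnDeriv_ne_top ρ ρ'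
  have hA_top : ∀ᵐ y ∂ρ', μ.rnDeriv ρ y = ⊤ → ρ.rnDeriv ρ' y = 0 :=
    ae_rnDeriv_zero_of_rnDeriv_top
  have hB_top : ∀ᵐ y ∂ρ', ν.rnDeriv ρ y = ⊤ → ρ.rnDeriv ρ' y = 0 :=
    ae_rnDeriv_zero_of_rnDeriv_top
  calc ∫⁻ y, μ.rnDeriv ρ' y ^ a * ν.rnDeriv ρ' y ^ (1 - a) ∂ρ'
      = ∫⁻ y, ρ.rnDeriv ρ' y * (μ.rnDeriv ρ y ^ a * ν.rnDeriv ρ y ^ (1 - a)) ∂ρ' := by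
        refine lintegral_congr_ae ?_
        filter_upwards [h1, h2, hk_top, hA_top, hB_top] with y e1 e2 hk hA hB
        simp only [Pi.mul_apply] at e1 e2
        rw [← e1, ← e2]
        rcases eq_or_ne (ρ.rnDeriv ρ' y) 0 with hk0 | hk0
        · simp [hk0, ENNReal.zero_rpow_of_pos ha]
        · have hA' : μ.rnDeriv ρ y ≠ ⊤ := fun h => hk0 (hA h)
          have hB' : ν.rnDeriv ρ y ≠ ⊤ := fun h => hk0 (hB h)
          rw [ENNReal.mul_rpow_of_ne_top hA' hk, ENNReal.mul_rpow_of_ne_top hB' hk,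
            mul_mul_mul_comm, ← ENNReal.rpow_add _ _ hk0 hk,
            (show a + (1 - a) = 1 by ring), ENNReal.rpow_one, mul_comm]
    _ = ∫⁻ y, μ.rnDeriv ρ y ^ a * ν.rnDeriv ρ y ^ (1 - a) ∂ρ := by
        refine lintegral_rnDeriv_mul hρ ?_
        exact (((Measure.measurable_rnDeriv μ ρ).pow_const a).mul
          ((Measure.measurable_rnDeriv ν ρ).pow_const (1 - a))).aemeasurable

lemma lintegral_rpow_rnDeriv_smul {ν ρ : Measure Y} [IsFiniteMeasure ν] [IsFiniteMeasure ρ]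
    {a : ℝ} {c : ℝ≥0∞} (hc0 : c ≠ 0) (hct : c ≠ ⊤) (g : Y → ℝ≥0∞) :
    ∫⁻ y, g y ^ a * ((c • ν).rnDeriv ρ y) ^ (1 - a) ∂ρ
      = c ^ (1 - a) * ∫⁻ y, g y ^ a * ν.rnDeriv ρ y ^ (1 - a) ∂ρ := by
  have hcr : c ^ (1 - a) ≠ ⊤ := by
    intro h
    rcases ENNReal.rpow_eq_top_iff.mp h with ⟨h1, _⟩ | ⟨h1, _⟩
    exacts [hc0 h1, hct h1]
  rw [← lintegral_const_mul' _ _ hcr]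
  refine lintegral_congr_ae ?_
  filter_upwards [Measure.rnDeriv_smul_left_of_ne_top ν ρ hct, Measure.rnDeriv_ne_top ν ρ]
    with y hy hB
  simp only [Pi.smul_apply, smul_eq_mul] at hy
  rw [hy, ENNReal.mul_rpow_of_ne_top hct hB, mul_left_comm]

lemma essSup_rnDeriv_div_congr {μ ν ρ ρ' : Measure Y}
    [IsFiniteMeasure μ] [IsFiniteMeasure ν] [IsFiniteMeasure ρ] [IsFiniteMeasure ρ']
    (hμ : μ ≪ ρ) (hν : ν ≪ ρ) (hρ : ρ ≪ ρ') :
    essSup (fun y => μ.rnDeriv ρ' y / ν.rnDeriv ρ' y) ρ'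
      = essSup (fun y => μ.rnDeriv ρ y / ν.rnDeriv ρ y) ρ := by
  have h1 : μ.rnDeriv ρ * ρ.rnDeriv ρ' =ᵐ[ρ'] μ.rnDeriv ρ' := Measure.rnDeriv_mul_rnDeriv hμ
  have h2 : ν.rnDeriv ρ * ρ.rnDeriv ρ' =ᵐ[ρ'] ν.rnDeriv ρ' := Measure.rnDeriv_mul_rnDeriv hν
  have hk_top : ∀ᵐ y ∂ρ', ρ.rnDeriv ρ' y ≠ ⊤ := Measure.rnDeriv_ne_top ρ ρ'
  have hk_pos : ∀ᵐ y ∂ρ, 0 < ρ.rnDeriv ρ' y := Measure.rnDeriv_pos hρ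
  apply le_antisymm
  · refine essSup_le_of_ae_le _ ?_
    set E := essSup (fun y => μ.rnDeriv ρ y / ν.rnDeriv ρ y) ρ with hE
    have hae : ∀ᵐ y ∂ρ, μ.rnDeriv ρ y / ν.rnDeriv ρ y ≤ E := ENNReal.ae_le_essSup _
    set G := {y | E < μ.rnDeriv ρ y / ν.rnDeriv ρ y} with hG
    have hGm : MeasurableSet G :=
      measurableSet_lt measurable_const
        ((Measure.measurable_rnDeriv μ ρ).div (Measure.measurable_rnDeriv ν ρ))
    have hρG : ρ G = 0 := by
      refine measure_eq_zero_iff_ae_notMem.mpr ?_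
      filter_upwards [hae] with y hy
      simp only [hG, Set.mem_setOf_eq, not_lt]
      exact hy
    have hGk : ∀ᵐ y ∂ρ', y ∈ G → ρ.rnDeriv ρ' y = 0 := ae_rnDeriv_zero_of_null hGm hρG
    filter_upwards [h1, h2, hk_top, hGk] with y e1 e2 hk hGk'
    simp only [Pi.mul_apply] at e1 e2
    rw [← e1, ← e2]
    rcases eq_or_ne (ρ.rnDeriv ρ' y) 0 with hk0 | hk0
    · simp [hk0]
    · have hy : y ∉ G := fun h => hk0 (hGk' h)
      rw [ENNReal.mul_div_mul_right _ _ hk0 hk]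
      simpa [hG, Set.mem_setOf_eq, not_lt] using hy
  · refine essSup_le_of_ae_le _ ?_
    have hae := ENNReal.ae_le_essSup (μ := ρ') (fun y => μ.rnDeriv ρ' y / ν.rnDeriv ρ' y)
    filter_upwards [hρ.ae_le h1, hρ.ae_le h2, hρ.ae_le hae, hk_pos, hρ.ae_le hk_top]
      with y e1 e2 hle hk0 hktop
    simp only [Pi.mul_apply] at e1 e2
    rw [← e1, ← e2, ENNReal.mul_div_mul_right _ _ hk0.ne' hktop] at hle
    exact hle

lemma renyiDiv_nonneg {α : ℝ≥0∞} (hα : 0 < α) (μ ν : Measure Y)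
    [IsProbabilityMeasure μ] [IsProbabilityMeasure ν] : 0 ≤ renyiDiv α μ ν := by
  have hμρ : μ ≪ μ + ν := Measure.AbsolutelyContinuous.rfl.add_right ν
  have hνρ : ν ≪ μ + ν := Measure.absolutelyContinuous_of_le (Measure.le_add_left le_rfl)
  have hAmeas := Measure.measurable_rnDeriv μ (μ + ν)
  have hBmeas := Measure.measurable_rnDeriv ν (μ + ν)
  have hintA : ∫⁻ y, μ.rnDeriv (μ + ν) y ∂(μ + ν) = 1 := by
    rw [Measure.lintegral_rnDeriv hμρ]; simp
  have hintB : ∫⁻ y, ν.rnDeriv (μ + ν) y ∂(μ + ν) = 1 := by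
    rw [Measure.lintegral_rnDeriv hνρ]; simp
  rcases eq_or_ne α 1 with h1 | h1
  · subst h1
    rw [renyiDiv, if_pos rfl]
    split_ifs with hcond
    · obtain ⟨hac, hint⟩ := hcond
      have h0 : (0 : EReal) = ((0 : ℝ) : EReal) := rfl
      rw [h0, EReal.coe_le_coe_iff]
      have hexp_int : Integrable (fun y => Real.exp (-llr μ ν y)) μ :=
        (integrable_congr (exp_neg_llr hac)).mpr Measure.integrable_toReal_rnDeriv
      have hexp : ∫ y, Real.exp (-llr μ ν y) ∂μ ≤ 1 := by
        rw [integral_congr_ae (exp_neg_llr hac)]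
        calc ∫ y, (ν.rnDeriv μ y).toReal ∂μ ≤ (ν Set.univ).toReal := by
              have := Measure.setIntegral_toReal_rnDeriv_le (μ := ν) (ν := μ)
                (s := Set.univ) (measure_ne_top ν _)
              simpa using this
          _ = 1 := by simp
      have hjen : Real.exp (⨍ y, -llr μ ν y ∂μ) ≤ ⨍ y, Real.exp (-llr μ ν y) ∂μ := by
        have := convexOn_exp.map_average_le Real.continuous_exp.continuousOn
          isClosed_univ (ae_of_all _ fun x => Set.mem_univ _) hint.neg ?_
        · exact this
        · exact (integrable_congr (by
            filter_upwards [exp_neg_llr hac] with y hy using hy)).mpr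
            Measure.integrable_toReal_rnDeriv
      rw [average_eq_integral, average_eq_integral, integral_neg] at hjen
      have hle1 : Real.exp (-∫ y, llr μ ν y ∂μ) ≤ 1 := hjen.trans hexp
      have := Real.exp_le_one_iff.mp hle1
      linarith
    · exact le_top
  rcases eq_or_ne α ⊤ with ht | ht
  · subst ht
    rw [renyiDiv, if_neg (by simp), if_pos rfl]
    set E := essSup (fun y => μ.rnDeriv (μ + ν) y / ν.rnDeriv (μ + ν) y) (μ + ν) with hEdef
    have h1E : 1 ≤ E := by
      by_contra hlt
      rw [not_le] at hlt
      have hae := ENNReal.ae_le_essSup (μ := μ + ν)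
        (fun y => μ.rnDeriv (μ + ν) y / ν.rnDeriv (μ + ν) y)
      have hAB : ∀ᵐ y ∂(μ + ν), μ.rnDeriv (μ + ν) y ≤ E * ν.rnDeriv (μ + ν) y := by
        filter_upwards [hae, Measure.rnDeriv_ne_top ν (μ + ν)] with y hy hB
        rcases eq_or_ne (ν.rnDeriv (μ + ν) y) 0 with hB0 | hB0
        · rw [hB0] at hy ⊢
          rcases eq_or_ne (μ.rnDeriv (μ + ν) y) 0 with hA0 | hA0
          · simp [hA0]
          · exfalso
            rw [ENNReal.div_zero hA0] at hy
            exact (hlt.trans_le (le_top.trans hy)).false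
        · exact (ENNReal.div_le_iff hB0 hB).mp hy
      have hE1 : (1 : ℝ≥0∞) ≤ E := by
        calc (1 : ℝ≥0∞) = ∫⁻ y, μ.rnDeriv (μ + ν) y ∂(μ + ν) := hintA.symm
          _ ≤ ∫⁻ y, E * ν.rnDeriv (μ + ν) y ∂(μ + ν) := lintegral_mono_ae hAB
          _ = E := by rw [lintegral_const_mul _ hBmeas, hintB, mul_one]
      exact hlt.not_ge hE1
    calc (0 : EReal) = ENNReal.log 1 := by simp
      _ ≤ ENNReal.log E := ENNReal.log_monotone h1E
  · have haT : α ≠ ⊤ := ht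
    rw [renyiDiv, if_neg h1, if_neg haT]
    set a := α.toReal with hadef
    have ha : 0 < a := ENNReal.toReal_pos hα.ne' haT
    have ha1 : a ≠ 1 := fun h => h1 ((ENNReal.toReal_eq_one_iff α).mp h)
    set A := μ.rnDeriv (μ + ν) with hA
    set B := ν.rnDeriv (μ + ν) with hB
    set H := ∫⁻ y, A y ^ a * B y ^ (1 - a) ∂(μ + ν) with hHdef
    rcases lt_or_gt_of_ne ha1 with hlt | hgt
    · -- a < 1 : H ≤ 1
      have hH : H ≤ 1 := by
        have hpq : (1 / a).HolderConjugate (1 / (1 - a)) :=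
          Real.holderConjugate_one_div ha (by linarith) (by ring)
        have hHold := ENNReal.lintegral_mul_le_Lp_mul_Lq (μ + ν) hpq
          ((hAmeas.pow_const a).aemeasurable) ((hBmeas.pow_const (1 - a)).aemeasurable)
        have e1 : ∀ y, (A y ^ a) ^ (1 / a) = A y := fun y => by
          rw [← ENNReal.rpow_mul, (show a * (1 / a) = 1 by field_simp), ENNReal.rpow_one]
        have e2 : ∀ y, (B y ^ (1 - a)) ^ (1 / (1 - a)) = B y := fun y => by
          have h1a : (1 : ℝ) - a ≠ 0 := sub_ne_zero.mpr hlt.ne'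
          rw [← ENNReal.rpow_mul, mul_one_div, div_self h1a, ENNReal.rpow_one]
        simp only [Pi.mul_apply, e1, e2] at hHold
        calc H ≤ (∫⁻ y, A y ∂(μ + ν)) ^ (1 / (1 / a))
              * (∫⁻ y, B y ∂(μ + ν)) ^ (1 / (1 / (1 - a))) := by
              simpa only [e1, e2] using hHold
          _ = 1 := by rw [hintA, hintB]; simp
      rcases eq_or_ne H 0 with hH0 | hH0
      · rw [hH0, ENNReal.log_zero, EReal.coe_mul_bot_of_neg
          (inv_lt_zero.mpr (by linarith : a - 1 < 0))]
        exact le_top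
      · have hHt : H ≠ ⊤ := fun h => by simp [h] at hH
        rw [ENNReal.log_pos_real hH0 hHt, ← EReal.coe_mul]
        have h0 : (0 : EReal) = ((0 : ℝ) : EReal) := rfl
        rw [h0, EReal.coe_le_coe_iff]
        have hHr : H.toReal ≤ 1 := by
          have := ENNReal.toReal_mono (by simp) hH
          simpa using this
        have hs : (a - 1)⁻¹ ≤ 0 := le_of_lt (inv_lt_zero.mpr (by linarith))
        have hlog : Real.log H.toReal ≤ 0 := Real.log_nonpos ENNReal.toReal_nonneg hHr
        nlinarith
    · -- a > 1 : 1 ≤ H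
      have h1H : (1 : ℝ≥0∞) ≤ H := by
        set Z := {y | B y = 0 ∧ A y ≠ 0} with hZdef
        have hZm : MeasurableSet Z :=
          (hBmeas (measurableSet_singleton 0)).inter
            ((hAmeas (measurableSet_singleton 0)).compl)
        by_cases hZ : (μ + ν) Z = 0
        · have hpq : a.HolderConjugate (Real.conjExponent a) :=
            Real.HolderConjugate.conjExponent hgt
          set u := fun y => A y * B y ^ ((1 - a) / a) with hu
          set v := fun y => B y ^ ((a - 1) / a) with hv
          have humeas : Measurable u := hAmeas.mul (hBmeas.pow_const _)
          have hvmeas : Measurable v := hBmeas.pow_const _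
          have huv : ∀ᵐ y ∂(μ + ν), u y * v y = A y := by
            filter_upwards [measure_eq_zero_iff_ae_notMem.mp hZ, Measure.rnDeriv_ne_top ν (μ + ν)]
              with y hyZ hBt
            rcases eq_or_ne (B y) 0 with hB0 | hB0
            · have hA0 : A y = 0 := by
                by_contra h
                exact hyZ ⟨hB0, h⟩
              simp [hu, hv, hB0, hA0]
            · simp only [hu, hv]
              rw [mul_assoc, ← ENNReal.rpow_add _ _ hB0 hBt,
                (show (1 - a) / a + (a - 1) / a = 0 by ring), ENNReal.rpow_zero, mul_one]
          have hHold := ENNReal.lintegral_mul_le_Lp_mul_Lq (μ + ν) hpq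
            humeas.aemeasurable hvmeas.aemeasurable
          have e1 : ∀ y, u y ^ a = A y ^ a * B y ^ (1 - a) := fun y => by
            rw [hu, ENNReal.mul_rpow_of_nonneg _ _ ha.le, ← ENNReal.rpow_mul,
              (show (1 - a) / a * a = 1 - a by field_simp)]
          have e2 : ∀ y, v y ^ (Real.conjExponent a) = B y := fun y => by
            have ha1' : a - 1 ≠ 0 := sub_ne_zero.mpr hgt.ne'
            rw [hv, ← ENNReal.rpow_mul, Real.conjExponent,
              (show (a - 1) / a * (a / (a - 1)) = 1 by
                rw [div_mul_div_comm, mul_comm (a - 1) a]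
                exact div_self (mul_ne_zero ha.ne' ha1')), ENNReal.rpow_one]
          have h1 : ∫⁻ y, (u * v) y ∂(μ + ν) = 1 := by
            rw [lintegral_congr_ae (by
              filter_upwards [huv] with y hy
              simpa using hy)]
            exact hintA
          rw [h1] at hHold
          simp only [e1, e2] at hHold
          rw [← hHdef, hintB, ENNReal.one_rpow, mul_one] at hHold
          by_contra hcon
          rw [not_le] at hcon
          have := ENNReal.rpow_lt_one hcon (by positivity : 0 < 1 / a)
          exact (hHold.trans_lt this).false
        · have hsub : ∫⁻ y in Z, A y ^ a * B y ^ (1 - a) ∂(μ + ν) = ⊤ := by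
            rw [setLIntegral_congr_fun_ae hZm (ae_of_all _ (fun y hy => ?_)), setLIntegral_const,
              ENNReal.top_mul hZ]
            obtain ⟨hB0, hA0⟩ := hy
            rw [hB0, ENNReal.zero_rpow_of_neg (by linarith), ENNReal.mul_top (by
              simp only [ne_eq, ENNReal.rpow_eq_zero_iff, not_or, not_and]
              exact ⟨fun h => absurd h hA0, fun _ => by linarith⟩)]
          calc (1 : ℝ≥0∞) ≤ ⊤ := le_top
            _ = ∫⁻ y in Z, A y ^ a * B y ^ (1 - a) ∂(μ + ν) := hsub.symm
            _ ≤ H := setLIntegral_le_lintegral _ _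
      rcases eq_or_ne H ⊤ with hHt | hHt
      · rw [hHt, ENNReal.log_top, EReal.coe_mul_top_of_pos (by
          simpa using inv_pos_of_pos (by linarith : 0 < a - 1))]
        exact le_top
      · have hH0 : H ≠ 0 := fun h => by simp [h] at h1H
        rw [ENNReal.log_pos_real hH0 hHt, ← EReal.coe_mul]
        have h0 : (0 : EReal) = ((0 : ℝ) : EReal) := rfl
        rw [h0, EReal.coe_le_coe_iff]
        have hHr : 1 ≤ H.toReal := by
          have := ENNReal.toReal_mono hHt h1H
          simpa using this
        exact mul_nonneg (le_of_lt (inv_pos.mpr (by linarith)))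
          (Real.log_nonneg hHr)

lemma renyiDiv_eq_top {α : ℝ≥0∞} (hα : 0 < α) (μ ν : Measure Y)
    [IsProbabilityMeasure μ] [IsProbabilityMeasure ν]
    {T : Set Y} (hT : MeasurableSet T) (hμT : μ T = 0) (hνT : ν Tᶜ = 0) :
    renyiDiv α μ ν = ⊤ := by
  have hμρ : μ ≪ μ + ν := Measure.AbsolutelyContinuous.rfl.add_right ν
  have hA0 : ∀ᵐ y ∂(μ + ν), y ∈ T → μ.rnDeriv (μ + ν) y = 0 :=
    ae_rnDeriv_zero_of_null hT hμT
  have hB0 : ∀ᵐ y ∂(μ + ν), y ∈ Tᶜ → ν.rnDeriv (μ + ν) y = 0 :=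
    ae_rnDeriv_zero_of_null hT.compl hνT
  have hintA : ∫⁻ y, μ.rnDeriv (μ + ν) y ∂(μ + ν) = 1 := by
    rw [Measure.lintegral_rnDeriv hμρ]; simp
  have hAne : ¬ (∀ᵐ y ∂(μ + ν), μ.rnDeriv (μ + ν) y = 0) := by
    intro h
    rw [lintegral_congr_ae (h.mono fun y hy => hy), lintegral_zero] at hintA
    simp at hintA
  rcases eq_or_ne α 1 with h1 | h1
  · subst h1
    rw [renyiDiv, if_pos rfl, if_neg]
    rintro ⟨hac, -⟩
    have hμTc : μ Tᶜ = 0 := hac hνT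
    have : μ Set.univ = 0 := by
      have hle : μ Set.univ ≤ μ T + μ Tᶜ := by
        rw [← Set.union_compl_self T]
        exact measure_union_le T Tᶜ
      simpa [hμT, hμTc] using hle
    simp [measure_univ] at this
  rcases eq_or_ne α ⊤ with ht | ht
  · subst ht
    rw [renyiDiv, if_neg (by simp), if_pos rfl]
    have hE : essSup (fun y => μ.rnDeriv (μ + ν) y / ν.rnDeriv (μ + ν) y) (μ + ν) = ⊤ := by
      by_contra hEne
      have hae := ENNReal.ae_le_essSup (μ := μ + ν)
        (fun y => μ.rnDeriv (μ + ν) y / ν.rnDeriv (μ + ν) y)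
      apply hAne
      filter_upwards [hae, hA0, hB0] with y hy h1y h2y
      by_cases hyT : y ∈ T
      · exact h1y hyT
      · by_contra hA
        rw [h2y hyT, ENNReal.div_zero hA] at hy
        exact hEne (top_le_iff.mp hy)
    rw [hE, ENNReal.log_top]
  · have ha : 0 < α.toReal := ENNReal.toReal_pos hα.ne' ht
    have ha1 : α.toReal ≠ 1 := fun h => h1 ((ENNReal.toReal_eq_one_iff α).mp h)
    rw [renyiDiv, if_neg h1, if_neg ht]
    rcases lt_or_gt_of_ne ha1 with hlt | hgt
    · have hH : ∫⁻ y, μ.rnDeriv (μ + ν) y ^ α.toReal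
          * ν.rnDeriv (μ + ν) y ^ (1 - α.toReal) ∂(μ + ν) = 0 := by
        rw [lintegral_congr_ae (g := fun _ => 0), lintegral_zero]
        filter_upwards [hA0, hB0] with y h1y h2y
        by_cases hyT : y ∈ T
        · rw [h1y hyT, ENNReal.zero_rpow_of_pos ha, zero_mul]
        · rw [h2y hyT, ENNReal.zero_rpow_of_pos (by linarith), mul_zero]
      rw [hH, ENNReal.log_zero]
      exact EReal.coe_mul_bot_of_neg (inv_lt_zero.mpr (by linarith : α.toReal - 1 < 0))
    · set Z := Tᶜ ∩ {y | μ.rnDeriv (μ + ν) y ≠ 0} with hZdef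
      have hZm : MeasurableSet Z :=
        hT.compl.inter ((Measure.measurable_rnDeriv μ (μ + ν)) (measurableSet_singleton 0)).compl
      have hZpos : (μ + ν) Z ≠ 0 := by
        intro h0
        apply hAne
        filter_upwards [measure_eq_zero_iff_ae_notMem.mp h0, hA0] with y h1y h2y
        by_cases hyT : y ∈ T
        · exact h2y hyT
        · by_contra hA
          exact h1y ⟨hyT, hA⟩
      have hsub : ∫⁻ y in Z, μ.rnDeriv (μ + ν) y ^ α.toReal
          * ν.rnDeriv (μ + ν) y ^ (1 - α.toReal) ∂(μ + ν) = ⊤ := by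
        have hcongr : ∫⁻ y in Z, μ.rnDeriv (μ + ν) y ^ α.toReal
            * ν.rnDeriv (μ + ν) y ^ (1 - α.toReal) ∂(μ + ν) = ∫⁻ _ in Z, ⊤ ∂(μ + ν) := by
          refine setLIntegral_congr_fun_ae hZm ?_
          filter_upwards [hB0] with y h2y hyZ
          obtain ⟨hyTc, hA⟩ := hyZ
          rw [h2y hyTc, ENNReal.zero_rpow_of_neg (by linarith), ENNReal.mul_top (by
            simp only [ne_eq, ENNReal.rpow_eq_zero_iff, not_or, not_and]
            exact ⟨fun h => absurd h hA, fun _ => by linarith⟩)]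
        rw [hcongr, setLIntegral_const, ENNReal.top_mul hZpos]
      have hH : ∫⁻ y, μ.rnDeriv (μ + ν) y ^ α.toReal
          * ν.rnDeriv (μ + ν) y ^ (1 - α.toReal) ∂(μ + ν) = ⊤ :=
        top_le_iff.mp (hsub ▸ setLIntegral_le_lintegral _ _)
      rw [hH, ENNReal.log_top]
      exact EReal.coe_mul_top_of_pos (inv_pos.mpr (by linarith : (0:ℝ) < α.toReal - 1))

lemma renyiDiv_decomp {α : ℝ≥0∞} (hα : 0 < α) (μ ν νs : Measure Y)
    [IsProbabilityMeasure μ] [IsFiniteMeasure ν] [IsFiniteMeasure νs]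
    {T : Set Y} (hT : MeasurableSet T) (hμT : μ T = 0) (hνT : ν T = 0) (hνsT : νs Tᶜ = 0)
    (hc0 : ν Set.univ ≠ 0) :
    renyiDiv α μ (ν + νs) = renyiDiv α μ ((ν Set.univ)⁻¹ • ν)
      - ((Real.log (ν Set.univ).toReal : ℝ) : EReal) := by
  set c := ν Set.univ with hcdef
  set L := Real.log c.toReal with hLdef
  have hct : c ≠ ⊤ := measure_ne_top ν _
  have hc_inv0 : c⁻¹ ≠ 0 := ENNReal.inv_ne_zero.mpr hct
  have hc_invt : c⁻¹ ≠ ⊤ := ENNReal.inv_ne_top.mpr hc0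
  haveI hν'fin : IsFiniteMeasure (c⁻¹ • ν) := by
    constructor
    rw [Measure.smul_apply, smul_eq_mul, ← hcdef, ENNReal.inv_mul_cancel hc0 hct]
    exact ENNReal.one_lt_top
  have hνν' : ν ≪ c⁻¹ • ν := Measure.absolutelyContinuous_smul hc_inv0
  have hν'ν : c⁻¹ • ν ≪ ν := Measure.smul_absolutelyContinuous
  have hν_sing : ν ⟂ₘ νs := ⟨T, hT, hνT, hνsT⟩
  have hμρ₂ : μ ≪ μ + ν := Measure.AbsolutelyContinuous.rfl.add_right ν
  have hνρ₂ : ν ≪ μ + ν := Measure.absolutelyContinuous_of_le (Measure.le_add_left le_rfl)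
  have hν'ρ₂ : c⁻¹ • ν ≪ μ + ν := hν'ν.trans hνρ₂
  have hρ₂Q : μ + ν ≪ μ + (ν + νs) :=
    Measure.absolutelyContinuous_of_le (add_le_add_right (Measure.le_add_right le_rfl) μ)
  have hρ₂ν' : μ + ν ≪ μ + c⁻¹ • ν := Measure.AbsolutelyContinuous.rfl.add hνν'
  have hloginv : Real.log (c⁻¹).toReal = -L := by
    rw [ENNReal.toReal_inv, Real.log_inv, hLdef]
  rcases eq_or_ne α 1 with h1 | h1
  · subst h1
    rw [renyiDiv, if_pos rfl, renyiDiv, if_pos rfl]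
    have hacs : μ ≪ ν + νs ↔ μ ≪ c⁻¹ • ν := by
      constructor
      · intro h
        refine Measure.AbsolutelyContinuous.trans ?_ hνν'
        refine Measure.AbsolutelyContinuous.mk fun E hE hνE => ?_
        have hE' : (ν + νs) (E ∩ Tᶜ) = 0 := by
          rw [Measure.add_apply]
          have e1 : ν (E ∩ Tᶜ) = 0 := measure_mono_null Set.inter_subset_left hνE
          have e2 : νs (E ∩ Tᶜ) = 0 := measure_mono_null Set.inter_subset_right hνsT
          rw [e1, e2, add_zero]
        have h1 := h hE'
        have h2 : μ (E ∩ T) = 0 := measure_mono_null Set.inter_subset_right hμT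
        have : μ E ≤ μ (E ∩ T) + μ (E ∩ Tᶜ) := by
          conv_lhs => rw [← Set.inter_union_compl E T]
          exact measure_union_le _ _
        simpa [h1, h2] using this
      · intro h
        exact (h.trans hν'ν).trans
          (Measure.absolutelyContinuous_of_le (Measure.le_add_right le_rfl))
    by_cases hac : μ ≪ ν + νs
    · have hμν' : μ ≪ c⁻¹ • ν := hacs.mp hac
      have hμν : μ ≪ ν := hμν'.trans hν'ν
      have h_rn : μ.rnDeriv (ν + νs) =ᵐ[μ] μ.rnDeriv ν :=
        hμν.ae_le (Measure.rnDeriv_add_right_of_mutuallySingular hν_sing)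
      have h_llr1 : llr μ (ν + νs) =ᵐ[μ] llr μ ν := by
        filter_upwards [h_rn] with y hy
        rw [llr, llr, hy]
      have h_llr2 : llr μ (c⁻¹ • ν) =ᵐ[μ] fun y => llr μ ν y - Real.log (c⁻¹).toReal :=
        llr_smul_right hμν c⁻¹ hc_inv0 hc_invt
      have h_llr : llr μ (ν + νs) =ᵐ[μ] fun y => llr μ (c⁻¹ • ν) y - L := by
        filter_upwards [h_llr1, h_llr2] with y hy1 hy2
        rw [hy1, hy2, hloginv]
        ring
      by_cases hint : Integrable (llr μ (c⁻¹ • ν)) μ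
      · rw [if_pos ⟨hac, (integrable_congr h_llr).mpr (hint.sub (integrable_const L))⟩,
          if_pos ⟨hμν', hint⟩]
        have hInt : ∫ y, llr μ (ν + νs) y ∂μ = ∫ y, llr μ (c⁻¹ • ν) y ∂μ - L := by
          rw [integral_congr_ae h_llr, integral_sub hint (integrable_const L), integral_const]
          simp [measure_univ]
        rw [hInt, EReal.coe_sub]
      · rw [if_neg (fun h => hint ?_), if_neg (fun h => hint h.2)]
        · rw [EReal.top_sub_coe]
        · have h2 := ((integrable_congr h_llr).mp h.2).add (integrable_const L)
          exact h2.congr (ae_of_all _ fun y => by simp)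
    · rw [if_neg (fun h => hac h.1), if_neg (fun h => hac (hacs.mpr h.1)), EReal.top_sub_coe]
  rcases eq_or_ne α ⊤ with ht | ht
  · subst ht
    rw [renyiDiv, if_neg (by simp), if_pos rfl, renyiDiv, if_neg (by simp), if_pos rfl]
    set ρQ := μ + (ν + νs) with hρQdef
    have key : essSup (fun y => μ.rnDeriv ρQ y / (ν + νs).rnDeriv ρQ y) ρQ
        = essSup (fun y => μ.rnDeriv (μ + ν) y / ν.rnDeriv (μ + ν) y) (μ + ν) := by
      have step1 : essSup (fun y => μ.rnDeriv ρQ y / (ν + νs).rnDeriv ρQ y) ρQ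
          = essSup (fun y => μ.rnDeriv ρQ y / ν.rnDeriv ρQ y) ρQ := by
        refine essSup_congr_ae ?_
        have h_add := Measure.rnDeriv_add' ν νs ρQ
        have hA0 : ∀ᵐ y ∂ρQ, y ∈ T → μ.rnDeriv ρQ y = 0 := ae_rnDeriv_zero_of_null hT hμT
        have hs0 : ∀ᵐ y ∂ρQ, y ∈ Tᶜ → νs.rnDeriv ρQ y = 0 :=
          ae_rnDeriv_zero_of_null hT.compl hνsT
        filter_upwards [h_add, hA0, hs0] with y h1 h2 h3
        by_cases hyT : y ∈ T
        · rw [h2 hyT, ENNReal.zero_div, ENNReal.zero_div]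
        · rw [h1, Pi.add_apply, h3 hyT, add_zero]
      rw [step1]
      exact essSup_rnDeriv_div_congr hμρ₂ hνρ₂ hρ₂Q
    have key2 : essSup (fun y => μ.rnDeriv (μ + c⁻¹ • ν) y
          / (c⁻¹ • ν).rnDeriv (μ + c⁻¹ • ν) y) (μ + c⁻¹ • ν)
        = c * essSup (fun y => μ.rnDeriv (μ + ν) y / ν.rnDeriv (μ + ν) y) (μ + ν) := by
      rw [essSup_rnDeriv_div_congr hμρ₂ hν'ρ₂ hρ₂ν']
      have hsmul := Measure.rnDeriv_smul_left_of_ne_top ν (μ + ν) hc_invt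
      rw [← ENNReal.essSup_const_mul]
      refine essSup_congr_ae ?_
      filter_upwards [hsmul] with y hy
      rw [hy, Pi.smul_apply, smul_eq_mul]
      rw [div_eq_mul_inv, div_eq_mul_inv, ENNReal.mul_inv (Or.inl hc_inv0) (Or.inl hc_invt),
        inv_inv, mul_left_comm]
    rw [key, key2, ENNReal.log_mul_add, ENNReal.log_pos_real hc0 hct, ← hLdef]
    generalize ENNReal.log (essSup (fun y => μ.rnDeriv (μ + ν) y / ν.rnDeriv (μ + ν) y) (μ + ν)) = x
    induction x
    · rw [EReal.add_bot, EReal.bot_sub]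
    · rename_i r
      rw [← EReal.coe_add, ← EReal.coe_sub]
      norm_num
    · rw [EReal.coe_add_top, EReal.top_sub_coe]
  · have ha : 0 < α.toReal := ENNReal.toReal_pos hα.ne' ht
    have ha1 : α.toReal ≠ 1 := fun h => h1 ((ENNReal.toReal_eq_one_iff α).mp h)
    set a := α.toReal with hadef
    rw [renyiDiv, if_neg h1, if_neg ht, renyiDiv, if_neg h1, if_neg ht]
    set ρQ := μ + (ν + νs) with hρQdef
    set H := ∫⁻ y, μ.rnDeriv (μ + ν) y ^ a * ν.rnDeriv (μ + ν) y ^ (1 - a) ∂(μ + ν) with hHdef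
    have key : ∫⁻ y, μ.rnDeriv ρQ y ^ a * (ν + νs).rnDeriv ρQ y ^ (1 - a) ∂ρQ = H := by
      have step1 : ∫⁻ y, μ.rnDeriv ρQ y ^ a * (ν + νs).rnDeriv ρQ y ^ (1 - a) ∂ρQ
          = ∫⁻ y, μ.rnDeriv ρQ y ^ a * ν.rnDeriv ρQ y ^ (1 - a) ∂ρQ := by
        refine lintegral_congr_ae ?_
        have h_add := Measure.rnDeriv_add' ν νs ρQ
        have hA0 : ∀ᵐ y ∂ρQ, y ∈ T → μ.rnDeriv ρQ y = 0 := ae_rnDeriv_zero_of_null hT hμT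
        have hs0 : ∀ᵐ y ∂ρQ, y ∈ Tᶜ → νs.rnDeriv ρQ y = 0 :=
          ae_rnDeriv_zero_of_null hT.compl hνsT
        filter_upwards [h_add, hA0, hs0] with y h1' h2 h3
        by_cases hyT : y ∈ T
        · rw [h2 hyT, ENNReal.zero_rpow_of_pos ha, zero_mul, zero_mul]
        · rw [h1', Pi.add_apply, h3 hyT, add_zero]
      rw [step1]
      exact lintegral_rpow_rnDeriv_congr ha hμρ₂ hνρ₂ hρ₂Q
    have key2 : ∫⁻ y, μ.rnDeriv (μ + c⁻¹ • ν) y ^ a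
          * (c⁻¹ • ν).rnDeriv (μ + c⁻¹ • ν) y ^ (1 - a) ∂(μ + c⁻¹ • ν)
        = c⁻¹ ^ (1 - a) * H := by
      rw [lintegral_rpow_rnDeriv_congr ha hμρ₂ hν'ρ₂ hρ₂ν']
      exact lintegral_rpow_rnDeriv_smul hc_inv0 hc_invt _
    rw [key, key2, ENNReal.log_mul_add, ENNReal.log_rpow]
    have hlogcinv : ENNReal.log c⁻¹ = ((-L : ℝ) : EReal) := by
      rw [ENNReal.log_pos_real hc_inv0 hc_invt, hloginv]
    rw [hlogcinv]
    have ha1' : a - 1 ≠ 0 := sub_ne_zero.mpr ha1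
    rw [(show ((1 - a : ℝ) : EReal) * ((-L : ℝ) : EReal) = (((1 - a) * (-L) : ℝ) : EReal) from
      (EReal.coe_mul _ _).symm)]
    set t := (1 - a) * (-L) with htdef
    have hst : (a - 1)⁻¹ * t = L := by
      rw [htdef, (show (1 - a) * (-L) = (a - 1) * L by ring), ← mul_assoc,
        inv_mul_cancel₀ ha1', one_mul]
    rcases eq_or_ne H 0 with hH0 | hH0
    · rw [hH0, ENNReal.log_zero, EReal.add_bot]
      rcases lt_or_gt_of_ne ha1 with hlt | hgt
      · rw [EReal.coe_mul_bot_of_neg (inv_lt_zero.mpr (by linarith : a - 1 < 0)),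
          EReal.top_sub_coe]
      · rw [EReal.coe_mul_bot_of_pos (inv_pos.mpr (by linarith : (0:ℝ) < a - 1)),
          EReal.bot_sub]
    rcases eq_or_ne H ⊤ with hHt | hHt
    · rw [hHt, ENNReal.log_top, EReal.coe_add_top]
      rcases lt_or_gt_of_ne ha1 with hlt | hgt
      · rw [EReal.coe_mul_top_of_neg (inv_lt_zero.mpr (by linarith : a - 1 < 0)),
          EReal.bot_sub]
      · rw [EReal.coe_mul_top_of_pos (inv_pos.mpr (by linarith : (0:ℝ) < a - 1)),
          EReal.top_sub_coe]
    · rw [ENNReal.log_pos_real hH0 hHt, ← EReal.coe_add, ← EReal.coe_mul, ← EReal.coe_mul,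
        ← EReal.coe_sub]
      norm_cast
      rw [mul_add, hst]
      ring

end RenyiAux

end AuxiliaryLemmas

/-- If `D_α(W‖Q|P) < ∞` and `Q_∼` is the `q_P`-absolutely continuous part of `Q`,
then `‖Q_∼‖ > 0` and `D_α(W‖Q|P) = D_α(W‖Q_∼/‖Q_∼‖|P) - ln ‖Q_∼‖`. -/
theorem condRenyiDiv_eq_condRenyiDiv_ac_part_sub_log
    [MeasurableSpace.CountablyGenerated Y]
    (α : ℝ≥0∞) (hα : 0 < α)
    (W : Kernel X Y) [IsMarkovKernel W]
    (P : Measure X) [IsProbabilityMeasure P]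
    (Q : Measure Y) [IsProbabilityMeasure Q]
    (Qac : Measure Y)
    (hQac : Qac = (outputDist W P).withDensity (Q.rnDeriv (outputDist W P)))
    (hfin : condRenyiDiv α W Q P < ⊤) :
    0 < Qac Set.univ ∧
      condRenyiDiv α W Q P =
        condRenyiDiv α W ((Qac Set.univ)⁻¹ • Qac) P
          - ((Real.log (Qac Set.univ).toReal : ℝ) : EReal) := by
  haveI hqPprob : IsProbabilityMeasure (outputDist W P) := by
    constructor
    rw [outputDist, Measure.bind_apply MeasurableSet.univ (Kernel.measurable W).aemeasurable]
    simp
  set qP := outputDist W P with hqPdef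
  set Qs := Q.singularPart qP with hQsdef
  have hdecomp : Qac + Qs = Q := by
    rw [hQac, hQsdef]
    exact Measure.rnDeriv_add_singularPart Q qP
  haveI hQacfin : IsFiniteMeasure Qac := by
    constructor
    rw [hQac, withDensity_apply _ MeasurableSet.univ, setLIntegral_univ]
    exact Measure.lintegral_rnDeriv_lt_top Q qP
  haveI hQsfin : IsFiniteMeasure Qs := by
    constructor
    calc Qs Set.univ ≤ Q Set.univ := Measure.le_iff'.mp (Measure.singularPart_le Q qP) Set.univ
      _ < ⊤ := measure_lt_top Q _
  obtain ⟨s, hsm, hQs_s, hqP_sc⟩ := Measure.mutuallySingular_singularPart Q qP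
  set T := sᶜ with hTdef
  have hT : MeasurableSet T := hsm.compl
  have hqPT : qP T = 0 := hqP_sc
  have hQsT : Qs Tᶜ = 0 := by
    rw [hTdef, compl_compl]
    exact hQs_s
  have hQacT : Qac T = 0 := by
    rw [hQac]
    exact (withDensity_absolutelyContinuous qP (Q.rnDeriv qP)) hqPT
  have haeT : ∀ᵐ x ∂P, W x T = 0 := by
    have h0 : ∫⁻ x, W x T ∂P = 0 := by
      rw [← Measure.bind_apply hT (Kernel.measurable W).aemeasurable]
      exact hqPT
    have := (lintegral_eq_zero_iff (Kernel.measurable_coe W hT)).mp h0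
    filter_upwards [this] with x hx using hx
  set c := Qac Set.univ with hcdef
  have hsum : c + Qs Set.univ = 1 := by
    have h : (Qac + Qs) Set.univ = Q Set.univ := by rw [hdecomp]
    rw [Measure.add_apply] at h
    rw [hcdef]
    rw [h, measure_univ]
  have hc1 : c ≤ 1 := hsum ▸ le_self_add
  have hct : c ≠ ⊤ := by rw [hcdef]; exact measure_ne_top Qac _
  have hc0 : c ≠ 0 := by
    intro h0
    have hQac0 : Qac = 0 := by
      refine Measure.measure_univ_eq_zero.mp ?_
      rw [← hcdef]
      exact h0
    have hQT : Q Tᶜ = 0 := by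
      rw [← hdecomp, Measure.add_apply, hQac0]
      simpa using hQsT
    have htop : ∀ᵐ x ∂P, renyiDiv α (W x) Q = ⊤ := by
      filter_upwards [haeT] with x hx
      exact RenyiAux.renyiDiv_eq_top hα (W x) Q hT hx hQT
    have hC : condRenyiDiv α W Q P = ⊤ := by
      rw [condRenyiDiv]
      have hp : ∫⁻ x, erealToENNReal (renyiDiv α (W x) Q) ∂P = ⊤ := by
        rw [lintegral_congr_ae (htop.mono fun x hx => by rw [hx, RenyiAux.phi_top])]
        simp [lintegral_const, measure_univ]
      have hn : ∫⁻ x, erealToENNReal (-(renyiDiv α (W x) Q)) ∂P = 0 := by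
        rw [lintegral_congr_ae (htop.mono fun x hx => ?_), lintegral_zero]
        rw [hx, EReal.neg_top, RenyiAux.phi_bot]
      rw [hp, hn, EReal.coe_ennreal_top, EReal.coe_ennreal_zero, sub_zero]
    rw [hC] at hfin
    exact lt_irrefl _ hfin
  refine ⟨pos_iff_ne_zero.mpr hc0, ?_⟩
  set L := Real.log c.toReal with hLdef
  have hLle : L ≤ 0 := by
    rw [hLdef]
    apply Real.log_nonpos ENNReal.toReal_nonneg
    have := ENNReal.toReal_mono (by simp : (1:ℝ≥0∞) ≠ ⊤) hc1
    simpa using this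
  have haeEq : ∀ᵐ x ∂P, renyiDiv α (W x) Q = renyiDiv α (W x) (c⁻¹ • Qac) - (L : EReal) := by
    filter_upwards [haeT] with x hx
    have h := RenyiAux.renyiDiv_decomp hα (W x) Qac Qs hT hx hQacT hQsT
      (by rw [← hcdef]; exact hc0)
    rw [hdecomp] at h
    exact h
  have haeNN : ∀ x, (0:EReal) ≤ renyiDiv α (W x) (c⁻¹ • Qac) := by
    haveI hν'prob : IsProbabilityMeasure (c⁻¹ • Qac) := by
      constructor
      rw [Measure.smul_apply, smul_eq_mul, ← hcdef, ENNReal.inv_mul_cancel hc0 hct]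
    exact fun x => RenyiAux.renyiDiv_nonneg hα (W x) _
  rw [condRenyiDiv, condRenyiDiv]
  have hneg1 : ∫⁻ x, erealToENNReal (-(renyiDiv α (W x) (c⁻¹ • Qac))) ∂P = 0 := by
    rw [lintegral_congr_ae (ae_of_all _ fun x => RenyiAux.phi_neg_of_nonneg (haeNN x)),
      lintegral_zero]
  have hnegQ : ∫⁻ x, erealToENNReal (-(renyiDiv α (W x) Q)) ∂P = 0 := by
    rw [lintegral_congr_ae ?_, lintegral_zero]
    filter_upwards [haeEq] with x hx
    refine RenyiAux.phi_neg_of_nonneg ?_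
    rw [hx, sub_eq_add_neg, ← EReal.coe_neg]
    exact add_nonneg (haeNN x) (by exact_mod_cast neg_nonneg.mpr hLle)
  have hpos : ∫⁻ x, erealToENNReal (renyiDiv α (W x) Q) ∂P
      = ∫⁻ x, erealToENNReal (renyiDiv α (W x) (c⁻¹ • Qac)) ∂P + ENNReal.ofReal (-L) := by
    have hstep : ∫⁻ x, erealToENNReal (renyiDiv α (W x) Q) ∂P
        = ∫⁻ x, (erealToENNReal (renyiDiv α (W x) (c⁻¹ • Qac)) + ENNReal.ofReal (-L)) ∂P := by
      refine lintegral_congr_ae ?_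
      filter_upwards [haeEq] with x hx
      rw [hx, sub_eq_add_neg, ← EReal.coe_neg,
        RenyiAux.phi_add_coe (haeNN x) (neg_nonneg.mpr hLle)]
    rw [hstep, lintegral_add_right _ measurable_const, lintegral_const, measure_univ, mul_one]
  rw [hpos, hneg1, hnegQ, EReal.coe_ennreal_zero, sub_zero, sub_zero, EReal.coe_ennreal_add,
    EReal.coe_ennreal_ofReal, max_eq_left (neg_nonneg.mpr hLle), sub_eq_add_neg, ← EReal.coe_neg]
end

section
/- (Sibson identity at order one.) For every probability measure Q on (Y,𝒴), D_1(W‖Q|P) = D_1(W‖q_P|P) + D_1(q_P‖Q), where both summands on the right are nonnegative (and the identity holds with values in [0,∞]). -/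
open MeasureTheory ProbabilityTheory Filter ENNReal
open scoped Classical

variable {X Y : Type*} [MeasurableSpace X] [MeasurableSpace Y]

namespace SibsonAux

noncomputable def klReal (t : ℝ) : ℝ := t * Real.log t - t + 1

lemma klReal_nonneg {t : ℝ} (ht : 0 ≤ t) : 0 ≤ klReal t := by
  rcases ht.eq_or_lt with h | h
  · simp [klReal, ← h]
  · have h1 : Real.log t⁻¹ ≤ t⁻¹ - 1 := Real.log_le_sub_one_of_pos (by positivity)
    rw [Real.log_inv] at h1
    have h2 : t * (-Real.log t) ≤ t * (t⁻¹ - 1) :=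
      mul_le_mul_of_nonneg_left h1 h.le
    rw [mul_sub, mul_inv_cancel₀ h.ne'] at h2
    simp only [klReal]; nlinarith

lemma klReal_mul {t β : ℝ} (ht : 0 ≤ t) (hβ : 0 < β) :
    klReal (t * β) = klReal t * β + klReal β + (t - 1) * (β * Real.log β) := by
  rcases ht.eq_or_lt with h | h
  · simp [klReal, ← h]; ring
  · simp only [klReal, Real.log_mul h.ne' hβ.ne']; ring

lemma measurable_klReal : Measurable klReal :=
  ((measurable_id.mul Real.measurable_log).sub measurable_id).add_const 1

noncomputable def klENN (t : ℝ≥0∞) : ℝ≥0∞ := ENNReal.ofReal (klReal t.toReal)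

lemma measurable_klENN : Measurable klENN :=
  (measurable_klReal.comp measurable_id.ennreal_toReal).ennreal_ofReal

lemma klENN_zero : klENN 0 = 1 := by simp [klENN, klReal]

lemma erealToENNReal_coe (r : ℝ) : erealToENNReal (r : EReal) = ENNReal.ofReal r := by
  simp [erealToENNReal]

lemma erealToENNReal_top : erealToENNReal (⊤ : EReal) = ⊤ := by simp [erealToENNReal]

lemma erealToENNReal_neg_of_nonneg {a : EReal} (ha : 0 ≤ a) : erealToENNReal (-a) = 0 := by
  induction a using EReal.rec with
  | bot => simp at ha
  | coe r =>
      have hr : (0:ℝ) ≤ r := by exact_mod_cast ha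
      rw [← EReal.coe_neg, erealToENNReal_coe]
      exact ENNReal.ofReal_eq_zero.mpr (by linarith)
  | top => simp [erealToENNReal]

lemma coe_erealToENNReal {a : EReal} (ha : 0 ≤ a) : ((erealToENNReal a : ℝ≥0∞) : EReal) = a := by
  induction a using EReal.rec with
  | bot => simp at ha
  | coe r =>
      have hr : (0:ℝ) ≤ r := by exact_mod_cast ha
      rw [erealToENNReal_coe, EReal.coe_ennreal_ofReal]
      simp [max_eq_left hr]
  | top => simp [erealToENNReal_top]

lemma renyiDiv_one (μ ν : Measure Y) :
    renyiDiv 1 μ ν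
      = if μ ≪ ν ∧ Integrable (llr μ ν) μ then ((∫ y, llr μ ν y ∂μ : ℝ) : EReal) else ⊤ := by
  simp [renyiDiv]

lemma kl_top_of_not_ac {μ ν : Measure Y} (h : ¬ μ ≪ ν) :
    erealToENNReal (renyiDiv 1 μ ν) = ⊤ := by
  rw [renyiDiv_one, if_neg (fun hc => h hc.1), erealToENNReal_top]

section KL

variable (μ ν : Measure Y) [IsProbabilityMeasure μ] [IsProbabilityMeasure ν]

lemma integrable_klReal_iff (hμν : μ ≪ ν) :
    Integrable (fun y => klReal ((μ.rnDeriv ν y).toReal)) ν ↔ Integrable (llr μ ν) μ := by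
  rw [← integrable_rnDeriv_smul_iff hμν (f := llr μ ν)]
  have hf : Integrable (fun y => (μ.rnDeriv ν y).toReal) ν := Measure.integrable_toReal_rnDeriv
  constructor
  · intro h
    have h2 : Integrable (fun y => klReal ((μ.rnDeriv ν y).toReal) + (μ.rnDeriv ν y).toReal) ν :=
      h.add hf
    have h3 : Integrable
        (fun y => klReal ((μ.rnDeriv ν y).toReal) + (μ.rnDeriv ν y).toReal - 1) ν :=
      h2.sub (integrable_const 1)
    exact h3.congr (ae_of_all _ fun y => by simp only [klReal, llr, smul_eq_mul]; ring)
  · intro h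
    have h2 : Integrable
        (fun y => (μ.rnDeriv ν y).toReal • llr μ ν y - (μ.rnDeriv ν y).toReal) ν := h.sub hf
    have h3 : Integrable
        (fun y => (μ.rnDeriv ν y).toReal • llr μ ν y - (μ.rnDeriv ν y).toReal + 1) ν :=
      h2.add (integrable_const 1)
    exact h3.congr (ae_of_all _ fun y => by simp only [klReal, llr, smul_eq_mul])

lemma integral_klReal (hμν : μ ≪ ν) (h_int : Integrable (llr μ ν) μ) :
    ∫ y, klReal ((μ.rnDeriv ν y).toReal) ∂ν = ∫ y, llr μ ν y ∂μ := by
  have hf : Integrable (fun y => (μ.rnDeriv ν y).toReal) ν := Measure.integrable_toReal_rnDeriv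
  have hsmul : Integrable (fun y => (μ.rnDeriv ν y).toReal • llr μ ν y) ν :=
    (integrable_rnDeriv_smul_iff hμν).mpr h_int
  have hf1 : ∫ y, (μ.rnDeriv ν y).toReal ∂ν = 1 := by
    rw [Measure.integral_toReal_rnDeriv hμν]; simp
  have hsub : Integrable
      (fun y => (μ.rnDeriv ν y).toReal • llr μ ν y - (μ.rnDeriv ν y).toReal) ν := hsmul.sub hf
  have heq : ∫ y, klReal ((μ.rnDeriv ν y).toReal) ∂ν
      = ∫ y, ((μ.rnDeriv ν y).toReal • llr μ ν y - (μ.rnDeriv ν y).toReal + 1) ∂ν := by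
    exact integral_congr_ae (ae_of_all _ fun y => by simp only [klReal, llr, smul_eq_mul])
  rw [heq, integral_add hsub (integrable_const 1), integral_sub hsmul hf, hf1,
    integral_const, ← integral_rnDeriv_smul hμν (f := llr μ ν)]
  simp

lemma kl_repr (hμν : μ ≪ ν) :
    erealToENNReal (renyiDiv 1 μ ν) = ∫⁻ y, klENN (μ.rnDeriv ν y) ∂ν := by
  have hmeas : Measurable (fun y => klReal ((μ.rnDeriv ν y).toReal)) :=
    measurable_klReal.comp (Measure.measurable_rnDeriv μ ν).ennreal_toReal
  have hnonneg : (0:Y → ℝ) ≤ᵐ[ν] fun y => klReal ((μ.rnDeriv ν y).toReal) :=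
    ae_of_all _ fun y => klReal_nonneg ENNReal.toReal_nonneg
  rw [renyiDiv_one]
  by_cases h_int : Integrable (llr μ ν) μ
  · rw [if_pos ⟨hμν, h_int⟩, erealToENNReal_coe, ← integral_klReal μ ν hμν h_int,
      ofReal_integral_eq_lintegral_ofReal ((integrable_klReal_iff μ ν hμν).mpr h_int) hnonneg]
    rfl
  · rw [if_neg (fun h => h_int h.2), erealToENNReal_top]
    symm
    by_contra h_ne
    exact h_int ((integrable_klReal_iff μ ν hμν).mp
      ⟨hmeas.aestronglyMeasurable,
        (hasFiniteIntegral_iff_ofReal hnonneg).mpr (lt_top_iff_ne_top.mpr h_ne)⟩)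

lemma renyiDiv_one_nonneg : 0 ≤ renyiDiv 1 μ ν := by
  rw [renyiDiv_one]
  split_ifs with h
  · have h0 : 0 ≤ ∫ y, llr μ ν y ∂μ := by
      rw [← integral_klReal μ ν h.1 h.2]
      exact integral_nonneg fun y => klReal_nonneg ENNReal.toReal_nonneg
    exact_mod_cast h0
  · exact le_top

end KL

lemma core (P : Measure X) [IsProbabilityMeasure P]
    (ψ : X → ℝ≥0∞) (hψ : Measurable ψ) (hψ1 : ∫⁻ x, ψ x ∂P = 1)
    (b : ℝ≥0∞) (hb0 : b ≠ 0) (hbt : b ≠ ⊤) :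
    ∫⁻ x, klENN (ψ x * b) ∂P = (∫⁻ x, klENN (ψ x) ∂P) * b + klENN b := by
  set β := b.toReal with hβ
  have hβpos : 0 < β := ENNReal.toReal_pos hb0 hbt
  have hb_eq : b = ENNReal.ofReal β := (ENNReal.ofReal_toReal hbt).symm
  have hψt : ∀ᵐ x ∂P, ψ x < ⊤ := ae_lt_top hψ (by rw [hψ1]; exact one_ne_top)
  have hψ'm : Measurable (fun x => (ψ x).toReal) := hψ.ennreal_toReal
  have hψ'int : Integrable (fun x => (ψ x).toReal) P :=
    integrable_toReal_of_lintegral_ne_top hψ.aemeasurable (by rw [hψ1]; exact one_ne_top)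
  have hψ'1 : ∫ x, (ψ x).toReal ∂P = 1 := by
    rw [integral_toReal hψ.aemeasurable hψt, hψ1]; rfl
  set c := β * Real.log β with hc
  set u : X → ℝ := fun x => klReal ((ψ x).toReal) * β + klReal β + ((ψ x).toReal - 1) * c
    with hu
  have hu_nonneg : ∀ x, 0 ≤ u x := fun x => by
    rw [hu]; dsimp only
    rw [← klReal_mul ENNReal.toReal_nonneg hβpos]
    exact klReal_nonneg (by positivity)
  have hpt : ∀ᵐ x ∂P, klENN (ψ x * b) = ENNReal.ofReal (u x) := by
    filter_upwards [hψt] with x hx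
    rw [klENN, ENNReal.toReal_mul, klReal_mul ENNReal.toReal_nonneg hβpos]
  have hV : ∫⁻ x, klENN (ψ x) ∂P = ∫⁻ x, ENNReal.ofReal (klReal ((ψ x).toReal)) ∂P := rfl
  have hvm : Measurable (fun x => klReal ((ψ x).toReal)) := measurable_klReal.comp hψ'm
  have hv_nonneg : (0:X → ℝ) ≤ᵐ[P] fun x => klReal ((ψ x).toReal) :=
    ae_of_all _ fun x => klReal_nonneg ENNReal.toReal_nonneg
  rw [lintegral_congr_ae hpt, hV]
  have hem : Measurable (fun x => |c| * ((ψ x).toReal + 1)) := (hψ'm.add_const 1).const_mul |c|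
  by_cases hv : ∫⁻ x, ENNReal.ofReal (klReal ((ψ x).toReal)) ∂P = ⊤
  · have hineq : ∀ x, ENNReal.ofReal (klReal ((ψ x).toReal)) * b
        ≤ ENNReal.ofReal (u x) + ENNReal.ofReal (|c| * ((ψ x).toReal + 1)) := by
      intro x
      have h0 : (0:ℝ) ≤ (ψ x).toReal := ENNReal.toReal_nonneg
      have habs : |((ψ x).toReal - 1) * c| ≤ ((ψ x).toReal + 1) * |c| := by
        rw [abs_mul]
        exact mul_le_mul_of_nonneg_right
          (abs_le.mpr ⟨by linarith, by linarith⟩) (abs_nonneg c)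
      have hle : klReal ((ψ x).toReal) * β ≤ u x + |c| * ((ψ x).toReal + 1) := by
        have h1 := neg_abs_le (((ψ x).toReal - 1) * c)
        have h2 := klReal_nonneg hβpos.le
        rw [hu]; dsimp only; nlinarith [habs]
      calc ENNReal.ofReal (klReal ((ψ x).toReal)) * b
          = ENNReal.ofReal (klReal ((ψ x).toReal) * β) := by
            rw [hb_eq, ← ENNReal.ofReal_mul (klReal_nonneg ENNReal.toReal_nonneg)]
        _ ≤ ENNReal.ofReal (u x + |c| * ((ψ x).toReal + 1)) := ENNReal.ofReal_le_ofReal hle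
        _ ≤ _ := ENNReal.ofReal_add_le
    have hbig : (∫⁻ x, ENNReal.ofReal (klReal ((ψ x).toReal)) ∂P) * b
        ≤ ∫⁻ x, ENNReal.ofReal (u x) ∂P + ∫⁻ x, ENNReal.ofReal (|c| * ((ψ x).toReal + 1)) ∂P := by
      rw [← lintegral_mul_const b hvm.ennreal_ofReal, ← lintegral_add_right _ hem.ennreal_ofReal]
      exact lintegral_mono hineq
    have hfin2 : ∫⁻ x, ENNReal.ofReal (|c| * ((ψ x).toReal + 1)) ∂P ≠ ⊤ := by
      have hle : ∀ x, ENNReal.ofReal (|c| * ((ψ x).toReal + 1))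
          ≤ ENNReal.ofReal |c| * (ψ x + 1) := by
        intro x
        rw [ENNReal.ofReal_mul (abs_nonneg c)]
        refine mul_le_mul_right ?_ _
        rw [ENNReal.ofReal_add ENNReal.toReal_nonneg zero_le_one, ENNReal.ofReal_one]
        exact add_le_add_left ENNReal.ofReal_toReal_le 1
      refine ne_top_of_le_ne_top ?_ (lintegral_mono hle)
      rw [lintegral_const_mul _ (hψ.add_const 1), lintegral_add_right _ measurable_const, hψ1]
      simp [ENNReal.mul_ne_top]
    have htop : ∫⁻ x, ENNReal.ofReal (u x) ∂P = ⊤ := by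
      by_contra hne
      rw [hv, ENNReal.top_mul hb0] at hbig
      exact ENNReal.add_ne_top.mpr ⟨hne, hfin2⟩ (top_le_iff.mp hbig)
    rw [hv, ENNReal.top_mul hb0, htop]
    simp
  · have hv_int : Integrable (fun x => klReal ((ψ x).toReal)) P :=
      ⟨hvm.aestronglyMeasurable,
        (hasFiniteIntegral_iff_ofReal hv_nonneg).mpr (lt_top_iff_ne_top.mpr hv)⟩
    have h1 : Integrable (fun x => klReal ((ψ x).toReal) * β) P := hv_int.mul_const β
    have h2 : Integrable (fun x => klReal ((ψ x).toReal) * β + klReal β) P :=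
      h1.add (integrable_const _)
    have h3 : Integrable (fun x => ((ψ x).toReal - 1) * c) P :=
      (hψ'int.sub (integrable_const 1)).mul_const c
    have hu_int : Integrable u P := h2.add h3
    have hu_val : ∫ x, u x ∂P = (∫ x, klReal ((ψ x).toReal) ∂P) * β + klReal β := by
      rw [hu]
      rw [integral_add h2 h3, integral_add h1 (integrable_const _), integral_mul_const,
        integral_mul_const, integral_sub hψ'int (integrable_const 1), hψ'1, integral_const]
      simp
    rw [← ofReal_integral_eq_lintegral_ofReal hu_int (ae_of_all _ hu_nonneg), hu_val,
      ← ofReal_integral_eq_lintegral_ofReal hv_int hv_nonneg]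
    rw [hb_eq, ENNReal.ofReal_add (mul_nonneg
        (integral_nonneg fun x => klReal_nonneg ENNReal.toReal_nonneg) hβpos.le)
      (klReal_nonneg hβpos.le), ENNReal.ofReal_mul' hβpos.le, klENN,
      ENNReal.toReal_ofReal hβpos.le]

lemma lintegral_top_of (P : Measure X) {f : X → ℝ≥0∞} {S : Set X} (hS : MeasurableSet S)
    (hS0 : P S ≠ 0) (hf : ∀ x ∈ S, f x = ⊤) : ∫⁻ x, f x ∂P = ⊤ := by
  rw [eq_top_iff]
  calc (⊤:ℝ≥0∞) = ⊤ * P S := (ENNReal.top_mul hS0).symm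
    _ = ∫⁻ _ in S, ⊤ ∂P := (setLIntegral_const S ⊤).symm
    _ = ∫⁻ x, S.indicator (fun _ => (⊤:ℝ≥0∞)) x ∂P := (lintegral_indicator hS _).symm
    _ ≤ ∫⁻ x, f x ∂P := lintegral_mono fun x => by
        by_cases hx : x ∈ S
        · rw [Set.indicator_of_mem hx, hf x hx]
        · rw [Set.indicator_of_notMem hx]; exact zero_le

lemma isProbabilityMeasure_bind (W : Kernel X Y) [IsMarkovKernel W]
    (P : Measure X) [IsProbabilityMeasure P] : IsProbabilityMeasure (P.bind W) := by
  constructor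
  rw [Measure.bind_apply MeasurableSet.univ W.measurable.aemeasurable]
  simp

theorem star [MeasurableSpace.CountablyGenerated Y]
    (W : Kernel X Y) [IsMarkovKernel W] (P : Measure X) [IsProbabilityMeasure P]
    (Q : Measure Y) [IsProbabilityMeasure Q] :
    ∫⁻ x, erealToENNReal (renyiDiv 1 (W x) Q) ∂P
      = ∫⁻ x, erealToENNReal (renyiDiv 1 (W x) (P.bind W)) ∂P
        + erealToENNReal (renyiDiv 1 (P.bind W) Q) := by
  haveI hq_prob : IsProbabilityMeasure (P.bind W) := isProbabilityMeasure_bind W P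
  set q : Measure Y := P.bind W with hq_def
  have h_bind : ∀ {s : Set Y}, MeasurableSet s → q s = ∫⁻ x, W x s ∂P :=
    fun hs => Measure.bind_apply hs W.measurable.aemeasurable
  by_cases hQac : q ≪ Q
  · -- q ≪ Q
    set w : Y → ℝ≥0∞ := q.rnDeriv Q with hw_def
    have hw : Measurable w := Measure.measurable_rnDeriv q Q
    have hq_eq : Q.withDensity w = q := Measure.withDensity_rnDeriv_eq q Q hQac
    have hAq : MeasurableSet {x | W x ≪ q} := by
      simpa [Kernel.const_apply] using
        Kernel.measurableSet_absolutelyContinuous W (Kernel.const X q)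
    set Z : Set Y := {y | w y = 0} with hZ_def
    have hZm : MeasurableSet Z := hw (measurableSet_singleton 0)
    have hqZ : q Z = 0 := by
      rw [← hq_eq, withDensity_apply _ hZm]
      exact (setLIntegral_eq_zero_iff hZm hw).mpr (ae_of_all _ fun y hy => hy)
    have hGm : MeasurableSet {x | W x Z = 0} := (W.measurable_coe hZm) (measurableSet_singleton 0)
    have hG : ∀ᵐ x ∂P, W x Z = 0 := by
      have h0 : ∫⁻ x, W x Z ∂P = 0 := by rw [← h_bind hZm]; exact hqZ
      exact ((lintegral_eq_zero_iff (W.measurable_coe hZm)).mp h0).mono fun x hx => hx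
    have hK1 : ∀ x, W x Z = 0 → W x ≪ Q → W x ≪ q := by
      intro x hxZ hxQ
      refine Measure.AbsolutelyContinuous.mk fun s hs hqs => ?_
      have h1 : ∫⁻ y in s, w y ∂Q = 0 := by rw [← withDensity_apply _ hs, hq_eq]; exact hqs
      have h2 : ∀ᵐ y ∂Q, y ∈ s → w y = 0 := (setLIntegral_eq_zero_iff hs hw).mp h1
      have h3 : Q (s \ Z) = 0 := by
        rw [measure_eq_zero_iff_ae_notMem]
        filter_upwards [h2] with y hy hmem
        exact hmem.2 (hy hmem.1)
      have h4 : W x s ≤ W x (s \ Z) + W x Z := by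
        refine le_trans (measure_mono fun y hy => ?_) (measure_union_le _ _)
        by_cases hyZ : y ∈ Z
        · exact Or.inr hyZ
        · exact Or.inl ⟨hy, hyZ⟩
      rw [hxQ h3, hxZ, add_zero] at h4
      exact le_antisymm h4 zero_le
    by_cases hae : ∀ᵐ x ∂P, W x ≪ q
    · -- MAIN CASE
      have hρ_meas : Measurable (fun p : X × Y => W.rnDeriv (Kernel.const X q) p.1 p.2) :=
        Kernel.measurable_rnDeriv _ _
      set ρ : X → Y → ℝ≥0∞ := fun x y => W.rnDeriv (Kernel.const X q) x y with hρ_def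
      have hρx : ∀ x, ρ x =ᵐ[q] (W x).rnDeriv q := fun x => by
        have h := Kernel.rnDeriv_eq_rnDeriv_measure (κ := W) (η := Kernel.const X q) (a := x)
        simpa [Kernel.const_apply] using h
      have hh_meas : Measurable (fun y => ∫⁻ x, ρ x y ∂P) := hρ_meas.lintegral_prod_left'
      have hM1 : (fun y => ∫⁻ x, ρ x y ∂P) =ᵐ[q] 1 := by
        refine ae_eq_of_forall_setLIntegral_eq_of_sigmaFinite hh_meas measurable_one
          fun s hs _ => ?_
        have hswap : ∫⁻ y in s, ∫⁻ x, ρ x y ∂P ∂q = ∫⁻ x, ∫⁻ y in s, ρ x y ∂q ∂P :=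
          (lintegral_lintegral_swap hρ_meas.aemeasurable).symm
        have hinner : ∀ᵐ x ∂P, ∫⁻ y in s, ρ x y ∂q = W x s := by
          filter_upwards [hae] with x hx
          rw [lintegral_congr_ae (ae_restrict_of_ae ((hρx x).mono fun y hy => hy))]
          exact Measure.setLIntegral_rnDeriv hx s
        simp only [Pi.one_apply]
        rw [hswap, lintegral_congr_ae hinner, ← h_bind hs, setLIntegral_one]
      have hM1Q : ∀ᵐ y ∂Q, w y ≠ 0 → ∫⁻ x, ρ x y ∂P = 1 := by
        refine (ae_withDensity_iff hw).mp ?_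
        rw [hq_eq]
        exact hM1.mono fun y hy => by simpa using hy
      have hchain : ∀ᵐ x ∂P, (fun y => ρ x y * w y) =ᵐ[Q] (W x).rnDeriv Q := by
        filter_upwards [hae] with x hx
        have h1 : (W x).rnDeriv q * q.rnDeriv Q =ᵐ[Q] (W x).rnDeriv Q :=
          Measure.rnDeriv_mul_rnDeriv hx
        have h2 : ∀ᵐ y ∂Q, w y ≠ 0 → ρ x y = (W x).rnDeriv q y := by
          refine (ae_withDensity_iff hw).mp ?_
          rw [hq_eq]
          exact hρx x
        filter_upwards [h1, h2] with y hy1 hy2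
        show ρ x y * w y = (W x).rnDeriv Q y
        have hy1' : (W x).rnDeriv q y * w y = (W x).rnDeriv Q y := hy1
        by_cases hwy : w y = 0
        · rw [hwy, mul_zero, ← hy1', hwy, mul_zero]
        · rw [← hy1', hy2 hwy]
      have hLf_meas : Measurable (fun p : X × Y => klENN (ρ p.1 p.2 * w p.2)) :=
        measurable_klENN.comp (hρ_meas.mul (hw.comp measurable_snd))
      have hBf_meas : Measurable (fun p : X × Y => w p.2 * klENN (ρ p.1 p.2)) :=
        (hw.comp measurable_snd).mul (measurable_klENN.comp hρ_meas)
      have hLHS : ∫⁻ x, erealToENNReal (renyiDiv 1 (W x) Q) ∂P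
          = ∫⁻ y, ∫⁻ x, klENN (ρ x y * w y) ∂P ∂Q := by
        rw [show ∫⁻ x, erealToENNReal (renyiDiv 1 (W x) Q) ∂P
            = ∫⁻ x, ∫⁻ y, klENN (ρ x y * w y) ∂Q ∂P from
          lintegral_congr_ae ?_, lintegral_lintegral_swap hLf_meas.aemeasurable]
        filter_upwards [hae, hchain] with x hx hxc
        rw [kl_repr (W x) Q (hx.trans hQac)]
        refine (lintegral_congr_ae (hxc.mono fun y hy => ?_)).symm
        have hy' : ρ x y * w y = (W x).rnDeriv Q y := hy
        rw [hy']
      have hB : ∫⁻ x, erealToENNReal (renyiDiv 1 (W x) q) ∂P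
          = ∫⁻ y, w y * ∫⁻ x, klENN (ρ x y) ∂P ∂Q := by
        have hstep : ∀ᵐ x ∂P, erealToENNReal (renyiDiv 1 (W x) q)
            = ∫⁻ y, w y * klENN (ρ x y) ∂Q := by
          filter_upwards [hae] with x hx
          have hmx : Measurable (fun y => klENN (ρ x y)) :=
            measurable_klENN.comp (hρ_meas.comp measurable_prodMk_left)
          have hcongr : (fun y => klENN ((W x).rnDeriv q y)) =ᵐ[q] fun y => klENN (ρ x y) :=
            (hρx x).mono fun y hy => by
              show klENN ((W x).rnDeriv q y) = klENN (ρ x y)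
              rw [← hy]
          rw [kl_repr (W x) q hx, lintegral_congr_ae hcongr,
            ← hq_eq, lintegral_withDensity_eq_lintegral_mul Q hw hmx]
          rfl
        rw [lintegral_congr_ae hstep, lintegral_lintegral_swap hBf_meas.aemeasurable]
        refine lintegral_congr fun y => ?_
        exact lintegral_const_mul _ (measurable_klENN.comp (hρ_meas.comp measurable_prodMk_right))
      have hC : erealToENNReal (renyiDiv 1 q Q) = ∫⁻ y, klENN (w y) ∂Q := kl_repr q Q hQac
      rw [hLHS, hB, hC, ← lintegral_add_right _
        (show Measurable fun y => klENN (w y) from measurable_klENN.comp hw)]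
      refine lintegral_congr_ae ?_
      filter_upwards [hM1Q, Measure.rnDeriv_lt_top q Q] with y h1 h2
      by_cases hwy : w y = 0
      · simp [hwy, klENN_zero, measure_univ]
      · rw [mul_comm (w y)]
        exact core P (fun x => ρ x y) (hρ_meas.comp measurable_prodMk_right) (h1 hwy)
          (w y) hwy h2.ne
    · -- not a.e. W x ≪ q : both sides ⊤
      have hPA : P {x | W x ≪ q}ᶜ ≠ 0 := by
        intro h0
        exact hae (by rw [ae_iff]; rwa [Set.compl_setOf] at h0)
      have hB : ∫⁻ x, erealToENNReal (renyiDiv 1 (W x) q) ∂P = ⊤ :=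
        lintegral_top_of P hAq.compl hPA (fun x hx => kl_top_of_not_ac hx)
      have hSm : MeasurableSet ({x | W x ≪ q}ᶜ ∩ {x | W x Z = 0}) := hAq.compl.inter hGm
      have hGc : P {x | W x Z = 0}ᶜ = 0 := by
        rw [Set.compl_setOf, ← ae_iff]; exact hG
      have hPS : P ({x | W x ≪ q}ᶜ ∩ {x | W x Z = 0}) ≠ 0 := by
        intro h0
        apply hPA
        have hsub : {x | W x ≪ q}ᶜ
            ⊆ ({x | W x ≪ q}ᶜ ∩ {x | W x Z = 0}) ∪ {x | W x Z = 0}ᶜ := by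
          intro x hx
          by_cases hxg : W x Z = 0
          · exact Or.inl ⟨hx, hxg⟩
          · exact Or.inr hxg
        refine le_antisymm ?_ zero_le
        calc P {x | W x ≪ q}ᶜ ≤ P (({x | W x ≪ q}ᶜ ∩ {x | W x Z = 0}) ∪ {x | W x Z = 0}ᶜ) :=
              measure_mono hsub
          _ ≤ P ({x | W x ≪ q}ᶜ ∩ {x | W x Z = 0}) + P {x | W x Z = 0}ᶜ := measure_union_le _ _
          _ = 0 := by rw [h0, hGc, add_zero]
      have hL : ∫⁻ x, erealToENNReal (renyiDiv 1 (W x) Q) ∂P = ⊤ :=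
        lintegral_top_of P hSm hPS
          (fun x hx => kl_top_of_not_ac (fun hc => hx.1 (hK1 x hx.2 hc)))
      rw [hL, hB]
      simp
  · -- ¬ q ≪ Q : both sides ⊤
    rw [kl_top_of_not_ac hQac]
    have hA : MeasurableSet {x | W x ≪ Q} := by
      simpa [Kernel.const_apply] using
        Kernel.measurableSet_absolutelyContinuous W (Kernel.const X Q)
    by_cases hA0 : P {x | W x ≪ Q}ᶜ = 0
    · exfalso
      apply hQac
      have hae' : ∀ᵐ x ∂P, W x ≪ Q := by
        rw [ae_iff]; rwa [Set.compl_setOf] at hA0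
      refine Measure.AbsolutelyContinuous.mk fun s hs hQs => ?_
      rw [h_bind hs]
      calc ∫⁻ x, W x s ∂P = ∫⁻ _, 0 ∂P :=
            lintegral_congr_ae (hae'.mono fun x hx => hx hQs)
        _ = 0 := lintegral_zero
    · rw [lintegral_top_of P hA.compl hA0 (fun x hx => kl_top_of_not_ac hx)]
      simp

end SibsonAux

/-- Sibson identity at order one:
`D_1(W‖Q|P) = D_1(W‖q_P|P) + D_1(q_P‖Q)`, both summands being nonnegative. -/
theorem sibson_identity_order_one
    [MeasurableSpace.CountablyGenerated Y]
    (W : Kernel X Y) [IsMarkovKernel W]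
    (P : Measure X) [IsProbabilityMeasure P]
    (Q : Measure Y) [IsProbabilityMeasure Q] :
    0 ≤ condRenyiDiv 1 W (outputDist W P) P ∧
      0 ≤ renyiDiv 1 (outputDist W P) Q ∧
      condRenyiDiv 1 W Q P =
        condRenyiDiv 1 W (outputDist W P) P + renyiDiv 1 (outputDist W P) Q := by
  haveI hq_prob : IsProbabilityMeasure (outputDist W P) := by
    rw [outputDist]; exact SibsonAux.isProbabilityMeasure_bind W P
  have hcond : ∀ (ν : Measure Y), IsProbabilityMeasure ν →
      condRenyiDiv 1 W ν P = ((∫⁻ x, erealToENNReal (renyiDiv 1 (W x) ν) ∂P : ℝ≥0∞) : EReal) := by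
    intro ν hν
    have hz : ∀ x, erealToENNReal (-(renyiDiv 1 (W x) ν)) = 0 := fun x =>
      SibsonAux.erealToENNReal_neg_of_nonneg (SibsonAux.renyiDiv_one_nonneg (W x) ν)
    rw [condRenyiDiv]
    simp [hz]
  refine ⟨?_, ?_, ?_⟩
  · rw [hcond _ hq_prob]; exact EReal.coe_ennreal_nonneg _
  · exact SibsonAux.renyiDiv_one_nonneg _ _
  · rw [hcond _ inferInstance, hcond _ hq_prob,
      ← SibsonAux.coe_erealToENNReal (SibsonAux.renyiDiv_one_nonneg (outputDist W P) Q),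
      ← EReal.coe_ennreal_add]
    congr 1
    have h := SibsonAux.star W P Q
    simpa [outputDist] using h
end

section
/- Let τ ∈ (1,2] and let f, g be nonnegative functions in L^τ(q_P) for a probability measure q_P. Then ∫ |f(y)^τ − g(y)^τ| q_P(dy) ≤ 2^{2−τ} ‖f − g‖_τ (2‖f‖_τ + ‖f − g‖_τ)^{τ−1}, where ‖h‖_τ = (∫ |h|^τ dq_P)^{1/τ}. In particular, the map sending a nonnegative f ∈ L^τ(q_P) to the finite measure with density f^τ with respect to q_P is continuous from the L^τ-norm topology to the total variation norm topology. -/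
open MeasureTheory Filter ENNReal

variable {Y : Type*} [MeasurableSpace Y]

/-- The finite measure `μ_{τ,f}` with density `f^τ` with respect to `ν`. -/
noncomputable def densPow (ν : Measure Y) (τ : ℝ) (f : Y → ℝ) : Measure Y :=
  ν.withDensity (fun y => ENNReal.ofReal (f y ^ τ))

/-- The total variation norm `‖μ - ν‖ = ∫ |dμ/dρ - dν/dρ| dρ` for `ρ = μ + ν`. -/
noncomputable def tvDist (μ ν : Measure Y) : ℝ :=
  (∫⁻ y, ‖(μ.rnDeriv (μ + ν) y).toReal - (ν.rnDeriv (μ + ν) y).toReal‖₊ ∂(μ + ν)).toReal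


lemma midpoint_rpow_ineq {p : ℝ} (hp0 : 0 ≤ p) (hp1 : p ≤ 1) {x y : ℝ} (hx : 0 ≤ x) (hy : 0 ≤ y) :
    x ^ p + y ^ p ≤ 2 * ((x + y) / 2) ^ p := by
  have h := (Real.concaveOn_rpow hp0 hp1).2 (Set.mem_Ici.2 hx) (Set.mem_Ici.2 hy)
    (by norm_num : (0:ℝ) ≤ 1/2) (by norm_num : (0:ℝ) ≤ 1/2) (by norm_num)
  simp only [smul_eq_mul] at h
  have he : (1/2 * x + 1/2 * y) = (x + y) / 2 := by ring
  rw [he] at h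
  linarith

lemma rpow_sub_rpow_le_mid {τ : ℝ} (hτ1 : 1 ≤ τ) (hτ2 : τ ≤ 2) {a b : ℝ} (hb : 0 ≤ b)
    (hba : b ≤ a) :
    a ^ τ - b ^ τ ≤ τ * (a - b) * ((a + b) / 2) ^ (τ - 1) := by
  have ha : 0 ≤ a := hb.trans hba
  set m := (a + b) / 2 with hm
  have hm0 : 0 ≤ m := by positivity
  set F : ℝ → ℝ := fun u => 2 * τ * u * m ^ (τ - 1) - (m + u) ^ τ + (m - u) ^ τ with hF
  have hderiv : ∀ u : ℝ, HasDerivAt F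
      (2 * τ * m ^ (τ - 1) - 1 * τ * (m + u) ^ (τ - 1) + (-1) * τ * (m - u) ^ (τ - 1)) u := by
    intro u
    have h1 : HasDerivAt (fun u : ℝ => (m + u) ^ τ) (1 * τ * (m + u) ^ (τ - 1)) u :=
      ((hasDerivAt_id u).const_add m).rpow_const (Or.inr hτ1)
    have h2 : HasDerivAt (fun u : ℝ => (m - u) ^ τ) ((-1) * τ * (m - u) ^ (τ - 1)) u :=
      ((hasDerivAt_id u).const_sub m).rpow_const (Or.inr hτ1)
    have h3 : HasDerivAt (fun u : ℝ => 2 * τ * u * m ^ (τ - 1)) (2 * τ * m ^ (τ - 1)) u := by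
      simpa using ((hasDerivAt_id u).const_mul (2 * τ)).mul_const (m ^ (τ - 1))
    exact (h3.sub h1).add h2
  have hmono : MonotoneOn F (Set.Icc 0 m) := by
    apply monotoneOn_of_deriv_nonneg (convex_Icc 0 m)
    · exact fun x _ => (hderiv x).continuousAt.continuousWithinAt
    · exact fun x _ => (hderiv x).differentiableAt.differentiableWithinAt
    · intro x hx
      rw [interior_Icc] at hx
      rw [(hderiv x).deriv]
      have hx0 : 0 ≤ m + x := by linarith [hx.1, hx.2]
      have hx1 : 0 ≤ m - x := by linarith [hx.2]
      have hmid := midpoint_rpow_ineq (by linarith : (0:ℝ) ≤ τ - 1) (by linarith : τ - 1 ≤ 1)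
        hx0 hx1
      have he : ((m + x) + (m - x)) / 2 = m := by ring
      rw [he] at hmid
      nlinarith
  have hu : (a - b) / 2 ∈ Set.Icc (0:ℝ) m := ⟨by linarith, by rw [hm]; linarith⟩
  have h0 : (0:ℝ) ∈ Set.Icc (0:ℝ) m := ⟨le_refl 0, hm0⟩
  have hle := hmono h0 hu (by linarith : (0:ℝ) ≤ (a - b) / 2)
  have hF0 : F 0 = 0 := by simp [hF]
  have e1 : m + (a - b) / 2 = a := by rw [hm]; ring
  have e2 : m - (a - b) / 2 = b := by rw [hm]; ring
  have hFu : F ((a - b) / 2) = τ * (a - b) * m ^ (τ - 1) - a ^ τ + b ^ τ := by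
    simp only [hF]
    rw [e1, e2]; ring
  rw [hF0, hFu] at hle
  linarith

lemma abs_rpow_sub_rpow_le {τ : ℝ} (hτ1 : 1 < τ) (hτ2 : τ ≤ 2) {a b : ℝ} (ha : 0 ≤ a)
    (hb : 0 ≤ b) :
    |a ^ τ - b ^ τ| ≤ 2 ^ (2 - τ) * (|a - b| * (a + b) ^ (τ - 1)) := by
  have h2 : (2:ℝ) ^ (2 - τ) * 2 ^ (τ - 1) = 2 := by
    rw [← Real.rpow_add (by norm_num : (0:ℝ) < 2)]
    norm_num
  have key : ∀ x y : ℝ, 0 ≤ y → y ≤ x →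
      x ^ τ - y ^ τ ≤ 2 ^ (2 - τ) * (|x - y| * (x + y) ^ (τ - 1)) := by
    intro x y hy hyx
    have hmain := rpow_sub_rpow_le_mid hτ1.le hτ2 hy hyx
    have hdiv : ((x + y) / 2) ^ (τ - 1) = (x + y) ^ (τ - 1) / 2 ^ (τ - 1) :=
      Real.div_rpow (by linarith [hy.trans hyx] : (0:ℝ) ≤ x + y) (by norm_num : (0:ℝ) ≤ 2) (τ - 1)
    rw [hdiv] at hmain
    have habs : |x - y| = x - y := abs_of_nonneg (by linarith)
    rw [habs]
    have h2pos : (0:ℝ) < 2 ^ (τ - 1) := Real.rpow_pos_of_pos (by norm_num) _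
    have hxy : 0 ≤ (x - y) * (x + y) ^ (τ - 1) :=
      mul_nonneg (by linarith) (Real.rpow_nonneg (by linarith [hy.trans hyx]) _)
    calc x ^ τ - y ^ τ ≤ τ * (x - y) * ((x + y) ^ (τ - 1) / 2 ^ (τ - 1)) := hmain
      _ = τ / 2 ^ (τ - 1) * ((x - y) * (x + y) ^ (τ - 1)) := by ring
      _ ≤ 2 / 2 ^ (τ - 1) * ((x - y) * (x + y) ^ (τ - 1)) := by
          apply mul_le_mul_of_nonneg_right _ hxy
          gcongr
      _ = 2 ^ (2 - τ) * ((x - y) * (x + y) ^ (τ - 1)) := by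
          have h2d : (2:ℝ) ^ (2 - τ) = 2 / 2 ^ (τ - 1) := by
            rw [eq_div_iff h2pos.ne']; exact h2
          rw [h2d]
  rcases le_total b a with h | h
  · rw [abs_of_nonneg (by
      have := Real.rpow_le_rpow hb h (by linarith : (0:ℝ) ≤ τ); linarith)]
    exact key a b hb h
  · rw [abs_of_nonpos (by
      have := Real.rpow_le_rpow ha h (by linarith : (0:ℝ) ≤ τ); linarith)]
    have := key b a ha h
    rw [abs_sub_comm, show b + a = a + b from by ring] at this
    linarith

lemma integral_abs_rpow_sub_rpow_le' (qP : Measure Y)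
    {τ : ℝ} (hτ1 : 1 < τ) (hτ2 : τ ≤ 2) {f g : Y → ℝ} (hf0 : 0 ≤ f) (hg0 : 0 ≤ g)
    (hf : MemLp f (ENNReal.ofReal τ) qP) (hg : MemLp g (ENNReal.ofReal τ) qP) :
    ∫ y, |f y ^ τ - g y ^ τ| ∂qP ≤
      2 ^ (2 - τ) * (eLpNorm (f - g) (ENNReal.ofReal τ) qP).toReal *
        (2 * (eLpNorm f (ENNReal.ofReal τ) qP).toReal +
          (eLpNorm (f - g) (ENNReal.ofReal τ) qP).toReal) ^ (τ - 1) := by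
  have hτ0 : (0:ℝ) < τ := lt_trans one_pos hτ1
  have hτ1' : (0:ℝ) < τ - 1 := by linarith
  set p : ℝ≥0∞ := ENNReal.ofReal τ with hp
  have hp0 : p ≠ 0 := by simp [hp, ENNReal.ofReal_eq_zero, not_le, hτ0]
  have hptop : p ≠ ∞ := ENNReal.ofReal_ne_top
  have hpt : p.toReal = τ := ENNReal.toReal_ofReal hτ0.le
  set q : ℝ := τ / (τ - 1) with hqdef
  have hpq : τ.HolderConjugate q := Real.HolderConjugate.conjExponent hτ1
  have hq0 : (0:ℝ) < q := hpq.symm.pos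
  set pq : ℝ≥0∞ := ENNReal.ofReal q with hpq'
  have hd : MemLp (f - g) p qP := hf.sub hg
  have habs : MemLp (fun y => |f y - g y|) p qP := by
    simpa [Real.norm_eq_abs] using hd.norm
  have hsum : MemLp (f + g) p qP := hf.add hg
  have hsum0 : ∀ y, 0 ≤ f y + g y := fun y => add_nonneg (hf0 y) (hg0 y)
  set v : Y → ℝ := fun y => (f y + g y) ^ (τ - 1) with hv
  have hveq : v = fun y => ‖(f + g) y‖ ^ (τ - 1) := by
    funext y; rw [Pi.add_apply, Real.norm_of_nonneg (hsum0 y)]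
  have hmul_exp : pq * ENNReal.ofReal (τ - 1) = p := by
    rw [hpq', hp, ← ENNReal.ofReal_mul hq0.le]
    congr 1
    rw [hqdef, div_mul_cancel₀ _ (by linarith : τ - 1 ≠ 0)]
  have hv_eLp : eLpNorm v pq qP = eLpNorm (f + g) p qP ^ (τ - 1) := by
    rw [hveq, eLpNorm_norm_rpow (f + g) hτ1', hmul_exp]
  have hv_meas : AEStronglyMeasurable v qP := by
    exact ((Real.continuous_rpow_const (by linarith : (0:ℝ) ≤ τ - 1)).measurable.comp_aemeasurable
      hsum.1.aemeasurable).aestronglyMeasurable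
  have hvmem : MemLp v pq qP := by
    refine ⟨hv_meas, ?_⟩
    rw [hv_eLp]
    exact ENNReal.rpow_lt_top_of_nonneg (by linarith) hsum.2.ne
  -- integrability of the product
  have hone : (1:ℝ≥0∞) / 1 = 1 / p + 1 / pq := by
    simp only [one_div, hp, hpq']
    rw [← ENNReal.ofReal_inv_of_pos hτ0, ← ENNReal.ofReal_inv_of_pos hq0,
      ← ENNReal.ofReal_add (by positivity) (by positivity), hpq.inv_add_inv_eq_one]
    simp
  have hw : Integrable (fun y => |f y - g y| * v y) qP := by
    have := memLp_one_iff_integrable.mp (hvmem.smul habs (r := 1) (hpqr := ⟨by simpa [one_div] using hone.symm⟩))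
    exact this
  -- Step 1: pointwise bound
  have step1 : ∫ y, |f y ^ τ - g y ^ τ| ∂qP ≤
      ∫ y, 2 ^ (2 - τ) * (|f y - g y| * v y) ∂qP := by
    refine integral_mono_of_nonneg (Filter.Eventually.of_forall fun y => abs_nonneg _)
      (hw.const_mul _) (Filter.Eventually.of_forall fun y => ?_)
    exact abs_rpow_sub_rpow_le hτ1 hτ2 (hf0 y) (hg0 y)
  rw [integral_const_mul] at step1
  -- Step 2: Hölder
  have step2 : ∫ y, |f y - g y| * v y ∂qP ≤
      (∫ y, |f y - g y| ^ τ ∂qP) ^ (1 / τ) * (∫ y, v y ^ q ∂qP) ^ (1 / q) :=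
    integral_mul_le_Lp_mul_Lq_of_nonneg hpq
      (Filter.Eventually.of_forall fun y => abs_nonneg _)
      (Filter.Eventually.of_forall fun y => Real.rpow_nonneg (hsum0 y) _)
      (by rwa [← hp]) (by rwa [← hpq'])
  -- identify first factor
  have hD : (∫ y, |f y - g y| ^ τ ∂qP) ^ (1 / τ) = (eLpNorm (f - g) p qP).toReal := by
    rw [hd.eLpNorm_eq_integral_rpow_norm hp0 hptop]
    rw [ENNReal.toReal_ofReal (by positivity)]
    simp only [Pi.sub_apply, Real.norm_eq_abs, hpt, one_div]
  -- identify second factor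
  have hvq : ∀ y, v y ^ q = ‖(f + g) y‖ ^ τ := by
    intro y
    rw [Pi.add_apply, Real.norm_of_nonneg (hsum0 y)]
    show ((f y + g y) ^ (τ - 1)) ^ q = (f y + g y) ^ τ
    rw [← Real.rpow_mul (hsum0 y)]
    congr 1
    rw [hqdef]
    field_simp
  set T : ℝ := (eLpNorm (f + g) p qP).toReal with hT
  have hTnn : 0 ≤ T := ENNReal.toReal_nonneg
  have hVq : (∫ y, v y ^ q ∂qP) = T ^ τ := by
    have h1 : ∫ y, v y ^ q ∂qP = ∫ y, ‖(f + g) y‖ ^ τ ∂qP :=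
      integral_congr_ae (Filter.Eventually.of_forall fun y => hvq y)
    have h2 := hsum.eLpNorm_eq_integral_rpow_norm hp0 hptop
    have h3 : T = (∫ y, ‖(f + g) y‖ ^ τ ∂qP) ^ τ⁻¹ := by
      rw [hT, h2, ENNReal.toReal_ofReal (Real.rpow_nonneg
        (integral_nonneg fun y => Real.rpow_nonneg (norm_nonneg _) _) _), hpt]
    rw [h1, h3, Real.rpow_inv_rpow
      (integral_nonneg fun y => Real.rpow_nonneg (norm_nonneg _) _) hτ0.ne']
  have hfactor2 : (∫ y, v y ^ q ∂qP) ^ (1 / q) = T ^ (τ - 1) := by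
    rw [hVq, ← Real.rpow_mul hTnn]
    congr 1
    rw [hqdef, one_div_div]
    field_simp
  set af : ℝ := (eLpNorm f p qP).toReal with haf
  set dd : ℝ := (eLpNorm (f - g) p qP).toReal with hdd
  have hddnn : 0 ≤ dd := ENNReal.toReal_nonneg
  have hp1 : (1:ℝ≥0∞) ≤ p := by
    rw [hp, ← ENNReal.ofReal_one]; exact ENNReal.ofReal_le_ofReal hτ1.le
  have hS : T ≤ 2 * af + dd := by
    have h1 : eLpNorm (f + g) p qP ≤ eLpNorm f p qP + eLpNorm g p qP :=
      eLpNorm_add_le hf.1 hg.1 hp1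
    have hgf : eLpNorm g p qP ≤ eLpNorm f p qP + eLpNorm (f - g) p qP := by
      have he : f + (g - f) = g := by ring
      calc eLpNorm g p qP = eLpNorm (f + (g - f)) p qP := by rw [he]
        _ ≤ eLpNorm f p qP + eLpNorm (g - f) p qP :=
            eLpNorm_add_le hf.1 (hg.sub hf).1 hp1
        _ = eLpNorm f p qP + eLpNorm (f - g) p qP := by rw [eLpNorm_sub_comm]
    have hfin : eLpNorm f p qP + (eLpNorm f p qP + eLpNorm (f - g) p qP) ≠ ∞ :=
      ENNReal.add_ne_top.mpr ⟨hf.2.ne, ENNReal.add_ne_top.mpr ⟨hf.2.ne, hd.2.ne⟩⟩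
    have hmono := ENNReal.toReal_mono hfin (le_trans h1 (add_le_add le_rfl hgf))
    rw [ENNReal.toReal_add hf.2.ne (ENNReal.add_ne_top.mpr ⟨hf.2.ne, hd.2.ne⟩),
      ENNReal.toReal_add hf.2.ne hd.2.ne] at hmono
    rw [hT, haf, hdd]
    linarith [hmono]
  have hfinal : T ^ (τ - 1) ≤ (2 * af + dd) ^ (τ - 1) :=
    Real.rpow_le_rpow hTnn hS (by linarith)
  calc ∫ y, |f y ^ τ - g y ^ τ| ∂qP
      ≤ 2 ^ (2 - τ) * ∫ y, |f y - g y| * v y ∂qP := step1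
    _ ≤ 2 ^ (2 - τ) * (dd * T ^ (τ - 1)) := by
        apply mul_le_mul_of_nonneg_left _ (by positivity)
        rw [← hfactor2]
        calc ∫ y, |f y - g y| * v y ∂qP
            ≤ (∫ y, |f y - g y| ^ τ ∂qP) ^ (1 / τ) * (∫ y, v y ^ q ∂qP) ^ (1 / q) := step2
          _ = dd * (∫ y, v y ^ q ∂qP) ^ (1 / q) := by rw [hD, hdd]
    _ ≤ 2 ^ (2 - τ) * (dd * (2 * af + dd) ^ (τ - 1)) := by
        apply mul_le_mul_of_nonneg_left _ (by positivity)
        exact mul_le_mul_of_nonneg_left hfinal hddnn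
    _ = 2 ^ (2 - τ) * dd * (2 * af + dd) ^ (τ - 1) := by ring

lemma tvDist_densPow_eq (qP : Measure Y) [IsProbabilityMeasure qP]
    {τ : ℝ} (hτ0 : 0 < τ) {f g : Y → ℝ} (hf0 : 0 ≤ f) (hg0 : 0 ≤ g)
    (hf : MemLp f (ENNReal.ofReal τ) qP) (hg : MemLp g (ENNReal.ofReal τ) qP) :
    tvDist (densPow qP τ f) (densPow qP τ g) = ∫ y, |f y ^ τ - g y ^ τ| ∂qP := by
  set p : ℝ≥0∞ := ENNReal.ofReal τ with hp
  have hp0 : p ≠ 0 := by simp [hp, ENNReal.ofReal_eq_zero, not_le, hτ0]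
  have hptop : p ≠ ∞ := ENNReal.ofReal_ne_top
  have hpt : p.toReal = τ := ENNReal.toReal_ofReal hτ0.le
  set pf : Y → ℝ≥0∞ := fun y => ENNReal.ofReal (f y ^ τ) with hpf_def
  set pg : Y → ℝ≥0∞ := fun y => ENNReal.ofReal (g y ^ τ) with hpg_def
  have hfτ : AEMeasurable (fun y => f y ^ τ) qP :=
    (Real.continuous_rpow_const hτ0.le).measurable.comp_aemeasurable hf.1.aemeasurable
  have hgτ : AEMeasurable (fun y => g y ^ τ) qP :=
    (Real.continuous_rpow_const hτ0.le).measurable.comp_aemeasurable hg.1.aemeasurable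
  have hpf : AEMeasurable pf qP := hfτ.ennreal_ofReal
  have hpg : AEMeasurable pg qP := hgτ.ennreal_ofReal
  have hIf : ∫⁻ y, pf y ∂qP < ∞ := by
    have h := lintegral_rpow_enorm_lt_top_of_eLpNorm_lt_top hp0 hptop hf.2
    rw [hpt] at h
    refine lt_of_eq_of_lt (lintegral_congr fun y => ?_) h
    show ENNReal.ofReal (f y ^ τ) = ‖f y‖ₑ ^ τ
    rw [← ENNReal.ofReal_rpow_of_nonneg (hf0 y) hτ0.le, ← Real.enorm_eq_ofReal (hf0 y)]
  have hIg : ∫⁻ y, pg y ∂qP < ∞ := by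
    have h := lintegral_rpow_enorm_lt_top_of_eLpNorm_lt_top hp0 hptop hg.2
    rw [hpt] at h
    refine lt_of_eq_of_lt (lintegral_congr fun y => ?_) h
    show ENNReal.ofReal (g y ^ τ) = ‖g y‖ₑ ^ τ
    rw [← ENNReal.ofReal_rpow_of_nonneg (hg0 y) hτ0.le, ← Real.enorm_eq_ofReal (hg0 y)]
  set μ : Measure Y := densPow qP τ f with hμ
  set ν : Measure Y := densPow qP τ g with hν
  haveI : IsFiniteMeasure μ := isFiniteMeasure_withDensity hIf.ne
  haveI : IsFiniteMeasure ν := isFiniteMeasure_withDensity hIg.ne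
  set w : Y → ℝ≥0∞ := fun y => pf y + pg y with hwdef
  have hw_meas : AEMeasurable w qP := hpf.add hpg
  have hρ : μ + ν = qP.withDensity w := by
    refine Measure.ext fun s hs => ?_
    rw [Measure.add_apply, hμ, hν, densPow, densPow, withDensity_apply _ hs,
      withDensity_apply _ hs, withDensity_apply _ hs,
      ← lintegral_add_left' (hpf.restrict) pg]
  have hμρ : μ ≪ μ + ν := (Measure.le_add_right le_rfl).absolutelyContinuous
  have hνρ : ν ≪ μ + ν := (Measure.le_add_left le_rfl).absolutelyContinuous
  have hfd : μ.rnDeriv qP =ᵐ[qP] pf := by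
    rw [hμ, densPow]; exact Measure.rnDeriv_withDensity₀ qP hpf
  have hgd : ν.rnDeriv qP =ᵐ[qP] pg := by
    rw [hν, densPow]; exact Measure.rnDeriv_withDensity₀ qP hpg
  have hwd : (μ + ν).rnDeriv qP =ᵐ[qP] w := by
    rw [hρ]; exact Measure.rnDeriv_withDensity₀ qP hw_meas
  have hA : μ.rnDeriv (μ + ν) * (μ + ν).rnDeriv qP =ᵐ[qP] μ.rnDeriv qP :=
    Measure.rnDeriv_mul_rnDeriv hμρ
  have hB : ν.rnDeriv (μ + ν) * (μ + ν).rnDeriv qP =ᵐ[qP] ν.rnDeriv qP :=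
    Measure.rnDeriv_mul_rnDeriv hνρ
  -- the measurable integrand
  set h : Y → ℝ≥0∞ :=
    fun y => (‖(μ.rnDeriv (μ + ν) y).toReal - (ν.rnDeriv (μ + ν) y).toReal‖₊ : ℝ≥0∞) with hhdef
  have hh_meas : Measurable h :=
    (((μ.measurable_rnDeriv (μ + ν)).ennreal_toReal.sub
      ((ν.measurable_rnDeriv (μ + ν)).ennreal_toReal)).nnnorm).coe_nnreal_ennreal
  -- pointwise a.e. identity
  have key : (fun y => w y * h y) =ᵐ[qP] fun y => ENNReal.ofReal |f y ^ τ - g y ^ τ| := by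
    filter_upwards [hA, hB, hwd, hfd, hgd] with y hAy hBy hwy hfy hgy
    have hXw : μ.rnDeriv (μ + ν) y * w y = pf y := by
      rw [← hfy, ← hAy, Pi.mul_apply, hwy]
    have hYw : ν.rnDeriv (μ + ν) y * w y = pg y := by
      rw [← hgy, ← hBy, Pi.mul_apply, hwy]
    by_cases hw0 : w y = 0
    · have hf0' : pf y = 0 := by rw [← hXw, hw0, mul_zero]
      have hg0' : pg y = 0 := by rw [← hYw, hw0, mul_zero]
      have hf0'' : f y ^ τ = 0 :=
        le_antisymm (ENNReal.ofReal_eq_zero.mp hf0') (Real.rpow_nonneg (hf0 y) τ)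
      have hg0'' : g y ^ τ = 0 :=
        le_antisymm (ENNReal.ofReal_eq_zero.mp hg0') (Real.rpow_nonneg (hg0 y) τ)
      simp [hw0, hf0'', hg0'']
    · have hwtop : w y ≠ ∞ := by
        simp [hwdef, hpf_def, hpg_def]
      have hXtop : μ.rnDeriv (μ + ν) y ≠ ∞ := by
        intro htop
        rw [htop, ENNReal.top_mul hw0] at hXw
        exact ENNReal.ofReal_ne_top hXw.symm
      have hYtop : ν.rnDeriv (μ + ν) y ≠ ∞ := by
        intro htop
        rw [htop, ENNReal.top_mul hw0] at hYw
        exact ENNReal.ofReal_ne_top hYw.symm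
      have hwt : 0 ≤ (w y).toReal := ENNReal.toReal_nonneg
      have hfval : (μ.rnDeriv (μ + ν) y).toReal * (w y).toReal = f y ^ τ := by
        rw [← ENNReal.toReal_mul, hXw]
        simp only [hpf_def]
        rw [ENNReal.toReal_ofReal (Real.rpow_nonneg (hf0 y) τ)]
      have hgval : (ν.rnDeriv (μ + ν) y).toReal * (w y).toReal = g y ^ τ := by
        rw [← ENNReal.toReal_mul, hYw]
        simp only [hpg_def]
        rw [ENNReal.toReal_ofReal (Real.rpow_nonneg (hg0 y) τ)]
      simp only [hhdef]
      rw [← enorm_eq_nnnorm, Real.enorm_eq_ofReal_abs, mul_comm,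
        ← ENNReal.ofReal_toReal hwtop, ← ENNReal.ofReal_mul (abs_nonneg _)]
      congr 1
      rw [← abs_of_nonneg hwt, ← abs_mul, sub_mul, hfval, hgval]
  -- assemble
  have hint_meas : AEStronglyMeasurable (fun y => |f y ^ τ - g y ^ τ|) qP :=
    ((continuous_abs.measurable.comp_aemeasurable (hfτ.sub hgτ))).aestronglyMeasurable
  rw [tvDist, ← hhdef, hρ, lintegral_withDensity_eq_lintegral_mul₀ hw_meas hh_meas.aemeasurable,
    integral_eq_lintegral_of_nonneg_ae (Filter.Eventually.of_forall fun y => abs_nonneg _)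
      hint_meas]
  congr 1
  exact lintegral_congr_ae key


/-- For `τ ∈ (1,2]` and nonnegative `f, g ∈ L^τ(q_P)`,
`∫ |f^τ - g^τ| dq_P ≤ 2^{2-τ} ‖f-g‖_τ (2‖f‖_τ + ‖f-g‖_τ)^{τ-1}`; in particular
`f ↦ μ_{τ,f}` is continuous from the `L^τ`-norm to the total variation norm. -/
theorem integral_abs_rpow_sub_rpow_le_and_continuity
    (qP : Measure Y) [IsProbabilityMeasure qP]
    (τ : ℝ) (hτ1 : 1 < τ) (hτ2 : τ ≤ 2) :
    (∀ f g : Y → ℝ, 0 ≤ f → 0 ≤ g →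
      MemLp f (ENNReal.ofReal τ) qP → MemLp g (ENNReal.ofReal τ) qP →
      ∫ y, |f y ^ τ - g y ^ τ| ∂qP ≤
        2 ^ (2 - τ) * (eLpNorm (f - g) (ENNReal.ofReal τ) qP).toReal *
          (2 * (eLpNorm f (ENNReal.ofReal τ) qP).toReal +
            (eLpNorm (f - g) (ENNReal.ofReal τ) qP).toReal) ^ (τ - 1)) ∧
    (∀ (F : ℕ → Y → ℝ) (f : Y → ℝ), (∀ n, 0 ≤ F n) → 0 ≤ f →
      (∀ n, MemLp (F n) (ENNReal.ofReal τ) qP) → MemLp f (ENNReal.ofReal τ) qP →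
      Tendsto (fun n => eLpNorm (F n - f) (ENNReal.ofReal τ) qP) atTop (nhds 0) →
      Tendsto (fun n => tvDist (densPow qP τ (F n)) (densPow qP τ f)) atTop (nhds 0)) := by
  have hτ0 : (0:ℝ) < τ := lt_trans one_pos hτ1
  constructor
  · intro f g hf0 hg0 hf hg
    exact integral_abs_rpow_sub_rpow_le' qP hτ1 hτ2 hf0 hg0 hf hg
  · intro F f hF0 hf0 hF hf htend
    have hτ1' : (0:ℝ) ≤ τ - 1 := by linarith
    set a : ℝ := (eLpNorm f (ENNReal.ofReal τ) qP).toReal with ha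
    set x : ℕ → ℝ := fun n => (eLpNorm (F n - f) (ENNReal.ofReal τ) qP).toReal with hx
    have hx0 : Tendsto x atTop (nhds 0) := by
      have h := (ENNReal.tendsto_toReal (by simp : (0:ℝ≥0∞) ≠ ∞)).comp htend
      simpa [hx, Function.comp_def] using h
    have hbound : ∀ n, tvDist (densPow qP τ (F n)) (densPow qP τ f) ≤
        2 ^ (2 - τ) * x n * (2 * a + x n) ^ (τ - 1) := by
      intro n
      rw [tvDist_densPow_eq qP hτ0 (hF0 n) hf0 (hF n) hf]
      have hcomm : ∫ y, |F n y ^ τ - f y ^ τ| ∂qP = ∫ y, |f y ^ τ - F n y ^ τ| ∂qP := by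
        simp_rw [abs_sub_comm]
      rw [hcomm]
      have hkey := integral_abs_rpow_sub_rpow_le' qP hτ1 hτ2 hf0 (hF0 n) hf (hF n)
      have hsub : eLpNorm (f - F n) (ENNReal.ofReal τ) qP
          = eLpNorm (F n - f) (ENNReal.ofReal τ) qP := eLpNorm_sub_comm f (F n) _ _
      rw [hsub] at hkey
      exact hkey
    have hlim : Tendsto (fun n => 2 ^ (2 - τ) * x n * (2 * a + x n) ^ (τ - 1)) atTop (nhds 0) := by
      have hcont : ContinuousAt (fun t : ℝ => 2 ^ (2 - τ) * t * (2 * a + t) ^ (τ - 1)) 0 :=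
        (continuousAt_const.mul continuousAt_id).mul
          ((continuousAt_const.add continuousAt_id).rpow_const (Or.inr hτ1'))
      have h := hcont.tendsto.comp hx0
      simpa [Function.comp_def] using h
    exact squeeze_zero (fun n => ENNReal.toReal_nonneg) hbound hlim
end
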